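/- arXiv:1906.07904 — 9 statements merged into one kernel-verified Lean document; each statement's English description precedes it below -/
import Mathlib

section
/- Let k be an integer with k ≥ 2. There exists a positive integer N₀ (depending on k) such that for every integer n ≥ N₀, there are infinitely many polynomials f(x) ∈ ℤ[x] of degree n with the following property: every k-free polynomial g(x) ∈ ℤ[x] satisfies L(f − g) ≥ 2. -/
open Polynomial

/-- The length of an integer polynomial: the sum of the absolute values of its
coefficients. -/
noncomputable def intLength (h : Polynomial ℤ) : ℤ :=
  ∑ j ∈ h.support, |h.coeff j|

/-- A polynomial in `ℤ[x]` is `k`-free if it is not divisible by the `k`-th power of any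
non-constant irreducible polynomial in `ℤ[x]`. -/
def KFree (k : ℕ) (g : Polynomial ℤ) : Prop :=
  ∀ p : Polynomial ℤ, Irreducible p → 0 < p.natDegree → ¬ p ^ k ∣ g

/-- A "Sylvester sequence" of pairwise coprime monic polynomials, starting at `X`. -/
noncomputable def sylQ : ℕ → Polynomial ℤ
  | 0 => X
  | (i + 1) => sylQ i ^ 2 + (1 - sylQ i)

lemma sylQ_monic_deg (i : ℕ) : (sylQ i).Monic ∧ 0 < (sylQ i).natDegree := by
  induction i with
  | zero => exact ⟨monic_X, by simp [sylQ]⟩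
  | succ i ih =>
    obtain ⟨hm, hd⟩ := ih
    have hQ0 : sylQ i ≠ 0 := hm.ne_zero
    have hmsq : (sylQ i ^ 2).Monic := hm.pow 2
    have hdsq : (sylQ i ^ 2).natDegree = 2 * (sylQ i).natDegree := by
      simp [natDegree_pow, Nat.mul_comm]
    have hlt : (1 - sylQ i).natDegree < (sylQ i ^ 2).natDegree := by
      have h1 : (1 - sylQ i).natDegree ≤ (sylQ i).natDegree := by
        refine le_trans (natDegree_sub_le _ _) ?_
        simp
      omega
    have hmon : (sylQ (i + 1)).Monic := by
      rw [sylQ]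
      exact hmsq.add_of_left (degree_lt_degree (by omega))
    refine ⟨hmon, ?_⟩
    have : (sylQ (i + 1)).natDegree = (sylQ i ^ 2).natDegree := by
      rw [sylQ]
      exact natDegree_add_eq_left_of_natDegree_lt hlt
    omega

lemma sylQ_dvd_sub_one {i m : ℕ} (h : i < m) : sylQ i ∣ sylQ m - 1 := by
  induction m with
  | zero => omega
  | succ m ih =>
    have heq : sylQ (m + 1) - 1 = sylQ m * (sylQ m - 1) := by
      rw [sylQ]; ring
    rcases Nat.lt_succ_iff_lt_or_eq.mp h with h' | h'
    · rw [heq]; exact Dvd.dvd.mul_left (ih h') _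
    · rw [heq, h']; exact Dvd.intro _ rfl

lemma sylQ_coprime {i m : ℕ} (h : i < m) : IsCoprime (sylQ i) (sylQ m) := by
  obtain ⟨c, hc⟩ := sylQ_dvd_sub_one h
  exact ⟨-c, 1, by linear_combination hc⟩

lemma sylQ_coprime' {i m : ℕ} (h : i ≠ m) : IsCoprime (sylQ i) (sylQ m) := by
  rcases Nat.lt_or_ge i m with h' | h'
  · exact sylQ_coprime h'
  · exact (sylQ_coprime (by omega)).symm

/-- Chinese Remainder construction. -/
lemma crt (k : ℕ) (r : ℕ → Polynomial ℤ) (N : ℕ) :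
    ∃ f : Polynomial ℤ, ∀ i < N, (sylQ i) ^ k ∣ f - r i := by
  induction N with
  | zero => exact ⟨0, by omega⟩
  | succ m ih =>
    obtain ⟨f, hf⟩ := ih
    have hco : IsCoprime (∏ i ∈ Finset.range m, (sylQ i) ^ k) ((sylQ m) ^ k) := by
      refine IsCoprime.prod_left fun i hi => ?_
      exact (sylQ_coprime' (by simp at hi; omega)).pow
    obtain ⟨u, v, huv⟩ := hco
    set P := ∏ i ∈ Finset.range m, (sylQ i) ^ k with hP
    refine ⟨f + P * (u * (r m - f)), fun i hi => ?_⟩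
    rcases Nat.lt_succ_iff_lt_or_eq.mp hi with h' | h'
    · have h1 : (sylQ i) ^ k ∣ f - r i := hf i h'
      have h2 : (sylQ i) ^ k ∣ P := Finset.dvd_prod_of_mem _ (Finset.mem_range.mpr h')
      have heq : f + P * (u * (r m - f)) - r i = (f - r i) + P * (u * (r m - f)) := by ring
      rw [heq]
      exact dvd_add h1 (h2.mul_right _)
    · subst h'
      have heq : f + P * (u * (r i - f)) - r i = (f - r i) * (v * (sylQ i) ^ k) := by
        linear_combination (r i - f) * huv
      rw [heq]
      exact ⟨(f - r i) * v, by ring⟩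

/-- If a monic nonconstant polynomial's `k`-th power divides `g`, then `g` is not `k`-free. -/
lemma not_kFree_of_monic_pow_dvd {k : ℕ} {q g : Polynomial ℤ} (hm : q.Monic)
    (hd : 0 < q.natDegree) (hdvd : q ^ k ∣ g) : ¬ KFree k g := by
  intro hkf
  have hq0 : q ≠ 0 := hm.ne_zero
  have hqu : ¬ IsUnit q := fun h => by
    have := natDegree_eq_zero_of_isUnit h; omega
  obtain ⟨p, hp, hpq⟩ := WfDvdMonoid.exists_irreducible_factor hqu hq0
  have hpd : 0 < p.natDegree := by
    by_contra h
    have h0 : p.natDegree = 0 := by omega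
    have hpc : p = C (p.coeff 0) := eq_C_of_natDegree_eq_zero h0
    have : p.coeff 0 ∣ q.coeff q.natDegree := by
      have := (C_dvd_iff_dvd_coeff (p.coeff 0) q).mp (hpc ▸ hpq)
      exact this q.natDegree
    rw [hm.coeff_natDegree] at this
    exact hp.not_isUnit (hpc ▸ (isUnit_C.mpr (isUnit_of_dvd_one this)))
  exact hkf p hp hpd (dvd_trans (pow_dvd_pow_of_dvd hpq k) hdvd)

/-- Classification of polynomials of length at most one. -/
lemma length_lt_two {h : Polynomial ℤ} (hl : intLength h < 2) :
    h = 0 ∨ ∃ j : ℕ, h = X ^ j ∨ h = -X ^ j := by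
  by_cases h0 : h = 0
  · exact Or.inl h0
  · right
    have hcard : (h.support.card : ℤ) ≤ intLength h := by
      have : ∀ j ∈ h.support, (1 : ℤ) ≤ |h.coeff j| := fun j hj =>
        Int.one_le_abs (by simpa using mem_support_iff.mp hj)
      calc (h.support.card : ℤ) = ∑ _j ∈ h.support, (1 : ℤ) := by simp
        _ ≤ ∑ j ∈ h.support, |h.coeff j| := Finset.sum_le_sum this
    have hpos : 0 < h.support.card := Finset.card_pos.mpr (nonempty_support_iff.mpr h0)
    have hone : h.support.card = 1 := by omega
    obtain ⟨j, x, hx, hhx⟩ := card_support_eq_one.mp hone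
    have hsupp : h.support = {j} := by rw [hhx]; exact support_C_mul_X_pow j hx
    have hcoeff : h.coeff j = x := by
      rw [hhx]; simp
    have hlen : intLength h = |x| := by
      rw [intLength, hsupp, Finset.sum_singleton, hcoeff]
    have : |x| < 2 := by rw [← hlen]; exact hl
    have habs := abs_lt.mp this
    have hx1 : x = 1 ∨ x = -1 := by omega
    refine ⟨j, ?_⟩
    rcases hx1 with h1 | h1
    · left; rw [hhx, h1]; simp
    · right; rw [hhx, h1]; simp

theorem stmt_0 (k : ℕ) (hk : 2 ≤ k) :
    ∃ N₀ : ℕ, 0 < N₀ ∧ ∀ n : ℕ, N₀ ≤ n →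
      {f : Polynomial ℤ | f.natDegree = n ∧
        ∀ g : Polynomial ℤ, KFree k g → 2 ≤ intLength (f - g)}.Infinite := by
  classical
  -- residues: r 0 = 0; r i = X^(i-1) for 1 ≤ i ≤ k; r i = -X^(i-1-k) for k < i ≤ 2k
  set r : ℕ → Polynomial ℤ := fun i =>
    if i = 0 then 0 else if i ≤ k then X ^ (i - 1) else -X ^ (i - 1 - k) with hr
  obtain ⟨f₀, hf₀⟩ := crt k r (2 * k + 1)
  set M : Polynomial ℤ := ∏ i ∈ Finset.range (2 * k + 1), (sylQ i) ^ k with hM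
  have hMmonic : M.Monic := monic_prod_of_monic _ _ fun i _ => ((sylQ_monic_deg i).1).pow k
  have hdvdM : ∀ i < 2 * k + 1, (sylQ i) ^ k ∣ M := fun i hi =>
    Finset.dvd_prod_of_mem _ (Finset.mem_range.mpr hi)
  set d := M.natDegree with hd
  refine ⟨f₀.natDegree + d + 1, by omega, fun n hn => ?_⟩
  set e := n - d with he
  -- the family of polynomials
  set F : ℕ → Polynomial ℤ := fun c => f₀ + C ((c : ℤ) + 1) * (X ^ e * M) with hF
  have hXeM : ∀ c : ℕ, (C ((c : ℤ) + 1) * (X ^ e * M)).natDegree = n := by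
    intro c
    have hc : ((c : ℤ) + 1) ≠ 0 := by positivity
    rw [natDegree_C_mul hc, natDegree_mul (pow_ne_zero e X_ne_zero) hMmonic.ne_zero,
      natDegree_X_pow]
    omega
  have hFdeg : ∀ c : ℕ, (F c).natDegree = n := by
    intro c
    rw [hF]
    simp only
    rw [natDegree_add_eq_right_of_natDegree_lt (by rw [hXeM c]; omega), hXeM c]
  have hinj : Function.Injective F := by
    intro a b hab
    have hcoeff : ∀ c : ℕ, (F c).coeff n = f₀.coeff n + ((c : ℤ) + 1) := by
      intro c
      have h1 : (X ^ e * M).coeff n = 1 := by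
        have : n = d + e := by omega
        rw [this, coeff_X_pow_mul, hd, hMmonic.coeff_natDegree]
      rw [hF]
      simp only [coeff_add, coeff_C_mul, h1, mul_one]
    have h1 : (F a).coeff n = (F b).coeff n := by rw [hab]
    rw [hcoeff a, hcoeff b] at h1
    have h2 : (a : ℤ) = b := by linarith
    exact_mod_cast h2
  refine Set.infinite_of_injective_forall_mem hinj fun c => ?_
  refine ⟨hFdeg c, fun g hg => ?_⟩
  by_contra hcon
  push_neg at hcon
  -- key divisibility: for suitable monic nonconstant q, q^k ∣ F c - h where h = F c - g
  have hdvdF : ∀ i < 2 * k + 1, (sylQ i) ^ k ∣ F c - r i := by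
    intro i hi
    have : F c - r i = (f₀ - r i) + C ((c : ℤ) + 1) * (X ^ e * M) := by rw [hF]; ring
    rw [this]
    exact dvd_add (hf₀ i hi) (((hdvdM i hi).mul_left _).mul_left _)
  have hX : sylQ 0 = X := rfl
  have hXk : (X : Polynomial ℤ) ^ k ∣ F c := by
    have := hdvdF 0 (by omega)
    simpa [hX, hr] using this
  rcases length_lt_two hcon with h0 | ⟨j, hj⟩
  · -- g = F c, divisible by X^k
    have hgF : g = F c := (eq_of_sub_eq_zero h0).symm
    exact not_kFree_of_monic_pow_dvd monic_X (by simp) (hgF ▸ hXk) hg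
  · -- h = ± X^j
    rcases Nat.lt_or_ge j k with hjk | hjk
    · rcases hj with hj | hj
      · -- F c - g = X^j, use sylQ (j+1), residue X^j
        have hi : j + 1 < 2 * k + 1 := by omega
        have hri : r (j + 1) = X ^ j := by
          simp only [hr]
          rw [if_neg (by omega), if_pos (by omega)]
          simp
        have hdvd : (sylQ (j + 1)) ^ k ∣ g := by
          have := hdvdF (j + 1) hi
          rw [hri] at this
          have hgeq : g = F c - X ^ j := by
            have := sub_eq_iff_eq_add.mp hj
            linear_combination -this
          rw [hgeq]
          exact this
        exact not_kFree_of_monic_pow_dvd (sylQ_monic_deg (j+1)).1 (sylQ_monic_deg (j+1)).2 hdvd hg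
      · -- F c - g = -X^j, use sylQ (k+j+1), residue -X^j
        have hi : k + j + 1 < 2 * k + 1 := by omega
        have hri : r (k + j + 1) = -X ^ j := by
          simp only [hr]
          rw [if_neg (by omega), if_neg (by omega)]
          have hje : k + j + 1 - 1 - k = j := by omega
          rw [hje]
        have hdvd : (sylQ (k + j + 1)) ^ k ∣ g := by
          have := hdvdF (k + j + 1) hi
          rw [hri] at this
          have hgeq : g = F c - (-X ^ j) := by linear_combination -hj
          rw [hgeq]
          exact this
        exact not_kFree_of_monic_pow_dvd (sylQ_monic_deg (k+j+1)).1 (sylQ_monic_deg (k+j+1)).2 hdvd hg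
    · -- j ≥ k: X^k divides both F c and X^j
      have hXj : (X : Polynomial ℤ) ^ k ∣ X ^ j := pow_dvd_pow X hjk
      have hdvd : (X : Polynomial ℤ) ^ k ∣ g := by
        rcases hj with hj | hj
        · have hgeq : g = F c - X ^ j := by linear_combination -hj
          rw [hgeq]; exact dvd_sub hXk hXj
        · have hgeq : g = F c + X ^ j := by linear_combination -hj
          rw [hgeq]; exact dvd_add hXk hXj
      exact not_kFree_of_monic_pow_dvd monic_X (by simp) hdvd hg
end

section
/- Fix ε > 0. For all sufficiently large n, the following holds: for every polynomial f(x) ∈ 𝔽₂[x] with deg f = n, there exists a squarefree polynomial g(x) ∈ 𝔽₂[x] of degree n such that L₂(f − g) ≤ (ln n)^{2 ln 2 + ε}. -/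
open Polynomial Finset

attribute [local instance] Classical.propDecidable

local notation "R2" => Polynomial (ZMod 2)

-- basic facts about ZMod 2
lemma zmod2_eq_one' : ∀ a : ZMod 2, a ≠ 0 → a = 1 := by decide

lemma zmod2_eq_one {a : ZMod 2} (h : a ≠ 0) : a = 1 := zmod2_eq_one' a h

lemma monic_of_ne_zero {h : R2} (h0 : h ≠ 0) : h.Monic := by
  have := Polynomial.leadingCoeff_ne_zero.mpr h0
  exact zmod2_eq_one this

lemma expand_two_eq_sq (q : R2) : Polynomial.expand (ZMod 2) 2 q = q * q := by
  have hfr : frobenius (ZMod 2) 2 = RingHom.id (ZMod 2) := by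
    ext a; simp [frobenius_def, ZMod.pow_card]
  have := Polynomial.map_frobenius_expand 2 q
  rw [hfr] at this
  simpa [sq] using this

lemma coeff_X_mul' (q : R2) (j : ℕ) :
    (X * q).coeff j = if j = 0 then 0 else q.coeff (j - 1) := by
  rcases Nat.eq_zero_or_pos j with rfl | hj
  · simp [Polynomial.mul_coeff_zero]
  · obtain ⟨i, rfl⟩ : ∃ i, j = i + 1 := ⟨j - 1, by omega⟩
    rw [Polynomial.coeff_X_mul, if_neg (by omega), Nat.add_sub_cancel]

lemma coeff_comb_even (A B : R2) (i : ℕ) :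
    (Polynomial.expand (ZMod 2) 2 A + X * Polynomial.expand (ZMod 2) 2 B).coeff (2 * i)
      = A.coeff i := by
  have h1 : (Polynomial.expand (ZMod 2) 2 A).coeff (2 * i) = A.coeff i := by
    rw [Polynomial.coeff_expand (by norm_num), if_pos ⟨i, by omega⟩]
    congr 1; omega
  have h2 : (X * Polynomial.expand (ZMod 2) 2 B).coeff (2 * i) = 0 := by
    rw [coeff_X_mul']
    rcases Nat.eq_zero_or_pos i with rfl | hi
    · simp
    · rw [if_neg (by omega), Polynomial.coeff_expand (by norm_num), if_neg (by omega)]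
  rw [Polynomial.coeff_add, h1, h2, add_zero]

lemma coeff_comb_odd (A B : R2) (i : ℕ) :
    (Polynomial.expand (ZMod 2) 2 A + X * Polynomial.expand (ZMod 2) 2 B).coeff (2 * i + 1)
      = B.coeff i := by
  have h1 : (Polynomial.expand (ZMod 2) 2 A).coeff (2 * i + 1) = 0 := by
    rw [Polynomial.coeff_expand (by norm_num), if_neg (by omega)]
  have h2 : (X * Polynomial.expand (ZMod 2) 2 B).coeff (2 * i + 1) = B.coeff i := by
    rw [coeff_X_mul', if_neg (by omega), Polynomial.coeff_expand (by norm_num),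
      if_pos ⟨i, by omega⟩]
    congr 1; omega
  rw [Polynomial.coeff_add, h1, h2, zero_add]

/-- uniqueness of even/odd decomposition -/
lemma comb_inj {A B A' B' : R2}
    (h : Polynomial.expand (ZMod 2) 2 A + X * Polynomial.expand (ZMod 2) 2 B
       = Polynomial.expand (ZMod 2) 2 A' + X * Polynomial.expand (ZMod 2) 2 B') :
    A = A' ∧ B = B' := by
  constructor
  · ext i
    have := congrArg (fun q => Polynomial.coeff q (2 * i)) h
    simpa only [coeff_comb_even] using this
  · ext i
    have := congrArg (fun q => Polynomial.coeff q (2 * i + 1)) h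
    simpa only [coeff_comb_odd] using this

noncomputable def evenP (f : R2) : R2 :=
  ∑ i ∈ Finset.range (f.natDegree + 1), Polynomial.C (f.coeff (2 * i)) * X ^ i

noncomputable def oddP (f : R2) : R2 :=
  ∑ i ∈ Finset.range (f.natDegree + 1), Polynomial.C (f.coeff (2 * i + 1)) * X ^ i

lemma coeff_sum_CX (c : ℕ → ZMod 2) (t i : ℕ) :
    (∑ j ∈ Finset.range t, Polynomial.C (c j) * X ^ j).coeff i
      = if i < t then c i else 0 := by
  rw [Polynomial.finset_sum_coeff]
  rw [Finset.sum_congr rfl (fun j _ => Polynomial.coeff_C_mul_X_pow (c j) j i)]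
  rw [Finset.sum_ite_eq (Finset.range t) i c]
  simp

lemma coeff_evenP (f : R2) (i : ℕ) : (evenP f).coeff i = f.coeff (2 * i) := by
  rw [evenP, coeff_sum_CX]
  split
  · rfl
  · rename_i h
    rw [eq_comm, Polynomial.coeff_eq_zero_of_natDegree_lt]
    omega

lemma coeff_oddP (f : R2) (i : ℕ) : (oddP f).coeff i = f.coeff (2 * i + 1) := by
  rw [oddP, coeff_sum_CX]
  split
  · rfl
  · rename_i h
    rw [eq_comm, Polynomial.coeff_eq_zero_of_natDegree_lt]
    omega

lemma decomp (f : R2) :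
    Polynomial.expand (ZMod 2) 2 (evenP f) + X * Polynomial.expand (ZMod 2) 2 (oddP f) = f := by
  ext j
  rcases Nat.even_or_odd j with ⟨i, hi⟩ | ⟨i, hi⟩
  · have hj : j = 2 * i := by omega
    rw [hj, coeff_comb_even, coeff_evenP]
  · have hj : j = 2 * i + 1 := by omega
    rw [hj, coeff_comb_odd, coeff_oddP]

/-- a prime whose square divides the combination divides both parts -/
lemma prime_sq_dvd {p A B : R2} (hp : Prime p)
    (h : p * p ∣ Polynomial.expand (ZMod 2) 2 A + X * Polynomial.expand (ZMod 2) 2 B) :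
    p ∣ A ∧ p ∣ B := by
  obtain ⟨c, hc⟩ := h
  have hdc : Polynomial.expand (ZMod 2) 2 (evenP c) + X * Polynomial.expand (ZMod 2) 2 (oddP c)
      = c := decomp c
  have hexp : Polynomial.expand (ZMod 2) 2 A + X * Polynomial.expand (ZMod 2) 2 B
      = Polynomial.expand (ZMod 2) 2 (p * evenP c) + X * Polynomial.expand (ZMod 2) 2 (p * oddP c) := by
    have h2 : (p * p) * c = (p * p) * (Polynomial.expand (ZMod 2) 2 (evenP c)
        + X * Polynomial.expand (ZMod 2) 2 (oddP c)) := by rw [hdc]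
    rw [map_mul, map_mul, expand_two_eq_sq p, hc, h2]
    ring
  obtain ⟨hA, hB⟩ := comb_inj hexp
  exact ⟨⟨evenP c, hA⟩, ⟨oddP c, hB⟩⟩

/-- coprime parts give a squarefree combination -/
lemma squarefree_comb {A B : R2} (h : IsCoprime A B) :
    Squarefree (Polynomial.expand (ZMod 2) 2 A + X * Polynomial.expand (ZMod 2) 2 B) := by
  set f := Polynomial.expand (ZMod 2) 2 A + X * Polynomial.expand (ZMod 2) 2 B with hf
  have hfne : f ≠ 0 := by
    intro h0
    have : Polynomial.expand (ZMod 2) 2 A + X * Polynomial.expand (ZMod 2) 2 B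
        = Polynomial.expand (ZMod 2) 2 0 + X * Polynomial.expand (ZMod 2) 2 0 := by
      simp [← hf, h0]
    obtain ⟨hA, hB⟩ := comb_inj this
    rw [hA, hB] at h
    simpa using h.isUnit_of_dvd' dvd_rfl dvd_rfl
  intro d hd
  by_contra hdu
  have hdne : d ≠ 0 := by
    intro h0; rw [h0] at hd; simp at hd; exact hfne hd
  obtain ⟨p, hpirr, hpd⟩ := WfDvdMonoid.exists_irreducible_factor hdu hdne
  have hpp : Prime p := hpirr.prime
  have : p * p ∣ f := dvd_trans (mul_dvd_mul hpd hpd) hd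
  obtain ⟨hA, hB⟩ := prime_sq_dvd hpp this
  exact hpp.not_unit (h.isUnit_of_dvd' hA hB)

noncomputable instance fintypeDegLT (k : ℕ) :
    Fintype ((Polynomial.degreeLT (ZMod 2) k : Set (Polynomial (ZMod 2)))) :=
  Fintype.ofEquiv (Fin k → ZMod 2) (Polynomial.degreeLTEquiv (ZMod 2) k).toEquiv.symm

noncomputable def VF (k : ℕ) : Finset R2 :=
  Set.toFinset (Polynomial.degreeLT (ZMod 2) k : Set R2)

lemma mem_VF {k : ℕ} {γ : R2} : γ ∈ VF k ↔ γ.degree < (k : ℕ∞) := by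
  rw [VF, Set.mem_toFinset, SetLike.mem_coe, Polynomial.mem_degreeLT]
  exact Iff.rfl

lemma card_VF (k : ℕ) : (VF k).card = 2 ^ k := by
  rw [VF, Set.toFinset_card]
  have : Fintype.card ((Polynomial.degreeLT (ZMod 2) k : Set (Polynomial (ZMod 2))))
      = Fintype.card (Fin k → ZMod 2) :=
    Fintype.card_congr (Polynomial.degreeLTEquiv (ZMod 2) k).toEquiv
  rw [this, Fintype.card_fun]
  simp

lemma mem_VF_of_degree_lt {k : ℕ} {γ : R2} (h : γ.degree < (k : ℕ∞)) : γ ∈ VF k :=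
  mem_VF.mpr h

/-- the fiber bound: polynomials in a coset divisible by `p` number at most `2^(k-d)` -/
lemma fiber_bound (k : ℕ) (F p : R2) (hp : p ≠ 0) (hd : p.natDegree ≤ k) :
    ((VF k).filter (fun γ => p ∣ F + γ)).card ≤ 2 ^ (k - p.natDegree) := by
  classical
  set d := p.natDegree with hdd
  set S := (VF k).filter (fun γ => p ∣ F + γ) with hS
  rcases S.eq_empty_or_nonempty with h | ⟨γ₀, hγ₀⟩
  · simp [h]
  · rw [hS, Finset.mem_filter, mem_VF] at hγ₀
    have key : ∀ γ, γ ∈ S → p ∣ γ - γ₀ ∧ p * ((γ - γ₀) / p) = γ - γ₀ := by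
      intro γ hγ
      rw [hS, Finset.mem_filter] at hγ
      have hdvd : p ∣ γ - γ₀ := by
        have := dvd_sub hγ.2 hγ₀.2
        simpa using this
      exact ⟨hdvd, EuclideanDomain.mul_div_cancel' hp hdvd⟩
    rw [← card_VF (k - d)]
    apply Finset.card_le_card_of_injOn (fun γ => (γ - γ₀) / p)
    · intro γ hγ
      obtain ⟨hdvd, hq⟩ := key γ hγ
      rw [Finset.mem_coe, Finset.mem_filter, mem_VF] at hγ
      apply mem_VF_of_degree_lt
      show ((γ - γ₀) / p).degree < ((k - d : ℕ) : WithBot ℕ)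
      rcases eq_or_ne ((γ - γ₀) / p) 0 with h0 | h0
      · rw [h0, Polynomial.degree_zero]
        exact WithBot.bot_lt_coe _
      · have hne : γ - γ₀ ≠ 0 := by
          intro h0'
          rw [h0', EuclideanDomain.zero_div] at h0
          exact h0 rfl
        have hsub : (γ - γ₀).degree < (k : ℕ∞) :=
          lt_of_le_of_lt (Polynomial.degree_sub_le _ _) (max_lt hγ.1 hγ₀.1)
        have hnd : (γ - γ₀).natDegree < k :=
          (Polynomial.natDegree_lt_iff_degree_lt hne).mpr hsub
        have hmul : (p * ((γ - γ₀) / p)).natDegree = d + ((γ - γ₀) / p).natDegree :=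
          Polynomial.natDegree_mul hp h0
        rw [hq] at hmul
        apply (Polynomial.natDegree_lt_iff_degree_lt h0).mp
        omega
    · intro γ hγ γ' hγ' heq
      obtain ⟨_, hq⟩ := key γ hγ
      obtain ⟨_, hq'⟩ := key γ' hγ'
      have : γ - γ₀ = γ' - γ₀ := by rw [← hq, ← hq']; simp only [heq]
      exact sub_left_inj.mp this

/-- count of irreducibles of degree d (constant coeff 1) -/
lemma irred_count (k d : ℕ) (hd : 1 ≤ d) :
    (((VF (k+1)).filter (fun p => Irreducible p)).filter (fun p => p.natDegree = d)).card
      ≤ 2 ^ (d - 1) + 1 := by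
  classical
  set Q := ((VF (k+1)).filter (fun p => Irreducible p)).filter (fun p => p.natDegree = d) with hQ
  have hsplit := Finset.card_filter_add_card_filter_not
    (s := Q) (p := fun p => p.coeff 0 = 1)
  have h1 : (Q.filter (fun p => p.coeff 0 = 1)).card ≤ 2 ^ (d - 1) := by
    have hcard : ((Finset.univ : Finset (Fin (d-1) → ZMod 2))).card = 2 ^ (d - 1) := by
      rw [Finset.card_univ, Fintype.card_fun]
      simp
    rw [← hcard]
    apply Finset.card_le_card_of_injOn (fun p => fun i : Fin (d-1) => p.coeff (i + 1))
    · intro p _; exact Finset.mem_univ _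
    · intro p hp q hq heq
      obtain ⟨hp', hp0⟩ := Finset.mem_filter.mp hp
      obtain ⟨hp'', hpd⟩ := Finset.mem_filter.mp hp'
      obtain ⟨_, hpirr⟩ := Finset.mem_filter.mp hp''
      obtain ⟨hq', hq0⟩ := Finset.mem_filter.mp hq
      obtain ⟨hq'', hqd⟩ := Finset.mem_filter.mp hq'
      obtain ⟨_, hqirr⟩ := Finset.mem_filter.mp hq''
      have hpne : p ≠ 0 := hpirr.ne_zero
      have hqne : q ≠ 0 := hqirr.ne_zero
      have hpl : p.coeff d = 1 := by
        rw [← hpd, Polynomial.coeff_natDegree]; exact monic_of_ne_zero hpne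
      have hql : q.coeff d = 1 := by
        rw [← hqd, Polynomial.coeff_natDegree]; exact monic_of_ne_zero hqne
      ext j
      rcases Nat.eq_zero_or_pos j with rfl | hj
      · rw [hp0, hq0]
      rcases lt_trichotomy j d with hjd | rfl | hjd
      · have := congrFun heq ⟨j - 1, by omega⟩
        simpa [Nat.sub_add_cancel hj] using this
      · rw [hpl, hql]
      · rw [Polynomial.coeff_eq_zero_of_natDegree_lt (by omega),
          Polynomial.coeff_eq_zero_of_natDegree_lt (by omega)]
  have h2 : (Q.filter (fun p => ¬ p.coeff 0 = 1)).card ≤ 1 := by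
    apply Finset.card_le_one.mpr
    have hX : ∀ p ∈ Q.filter (fun p => ¬ p.coeff 0 = 1), p = X := by
      intro p hp
      obtain ⟨hp', hp0⟩ := Finset.mem_filter.mp hp
      obtain ⟨hp'', hpd⟩ := Finset.mem_filter.mp hp'
      obtain ⟨_, hpirr⟩ := Finset.mem_filter.mp hp''
      have hc0 : p.coeff 0 = 0 := by
        by_contra hc
        exact hp0 (zmod2_eq_one hc)
      have hXd : X ∣ p := Polynomial.X_dvd_iff.mpr hc0
      obtain ⟨c, hc⟩ := hXd
      rcases hpirr.isUnit_or_isUnit hc with hu | hu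
      · exact absurd hu Polynomial.not_isUnit_X
      · obtain ⟨a, ha, ha2⟩ := Polynomial.isUnit_iff.mp hu
        have : a = 1 := zmod2_eq_one (by rintro rfl; simp at ha)
        rw [hc, ← ha2, this]
        simp
    intro a ha b hb
    rw [hX a ha, hX b hb]
  omega

/-- number of distinct prime factors of degree > k -/
lemma large_factors_bound (k m : ℕ) (h : R2) (h0 : h ≠ 0) (hdeg : h.natDegree ≤ m) :
    ((UniqueFactorizationMonoid.normalizedFactors h).toFinset.filter
        (fun p => k < p.natDegree)).card ≤ m / (k + 1) := by
  classical
  set T := ((UniqueFactorizationMonoid.normalizedFactors h).toFinset.filter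
      (fun p => k < p.natDegree)) with hT
  have hprime : ∀ p ∈ T, Prime p := by
    intro p hp
    rw [hT, Finset.mem_filter, Multiset.mem_toFinset] at hp
    exact UniqueFactorizationMonoid.prime_of_normalized_factor p hp.1
  have hdvd : (∏ p ∈ T, p) ∣ h := by
    have s1 : (∏ p ∈ T, p) ∣ ∏ p ∈ (UniqueFactorizationMonoid.normalizedFactors h).toFinset, p :=
      Finset.prod_dvd_prod_of_subset _ _ _ (Finset.filter_subset _ _)
    have s2 : (∏ p ∈ (UniqueFactorizationMonoid.normalizedFactors h).toFinset, p)
        ∣ (UniqueFactorizationMonoid.normalizedFactors h).prod := by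
      rw [Finset.prod_eq_multiset_prod]
      simp only [Multiset.toFinset_val, Multiset.map_id']
      exact Multiset.prod_dvd_prod_of_le (Multiset.dedup_le _)
    exact s1.trans (s2.trans
      (UniqueFactorizationMonoid.prod_normalizedFactors h0).dvd)
  have hdeg2 : (∏ p ∈ T, p).natDegree ≤ m :=
    le_trans (Polynomial.natDegree_le_of_dvd hdvd h0) hdeg
  have hdeg3 : (∏ p ∈ T, p).natDegree = ∑ p ∈ T, p.natDegree :=
    Polynomial.natDegree_prod _ _ (fun p hp => (hprime p hp).ne_zero)
  have hsum : T.card * (k + 1) ≤ ∑ p ∈ T, p.natDegree := by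
    rw [← smul_eq_mul]
    apply Finset.card_nsmul_le_sum
    intro p hp
    rw [hT, Finset.mem_filter] at hp
    omega
  rw [Nat.le_div_iff_mul_le (by omega)]
  omega

lemma sum_range_two_pow (t : ℕ) : ∑ e ∈ Finset.range t, 2 ^ e + 1 = 2 ^ t := by
  induction t with
  | zero => simp
  | succ t ih => rw [Finset.sum_range_succ]; omega

lemma sum_range_four_pow (t : ℕ) : 3 * (∑ e ∈ Finset.range t, 4 ^ e) + 1 = 4 ^ t := by
  induction t with
  | zero => simp
  | succ t ih => rw [Finset.sum_range_succ, pow_succ]; omega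

lemma unit_eq_one {u : R2} (hu : IsUnit u) : u = 1 := by
  obtain ⟨a, ha, ha2⟩ := Polynomial.isUnit_iff.mp hu
  have : a = 1 := zmod2_eq_one ha.ne_zero
  rw [← ha2, this, map_one]

lemma associated_eq {p q : R2} (h : Associated p q) : p = q := by
  obtain ⟨u, hu⟩ := h
  rw [← hu, unit_eq_one u.isUnit, mul_one]

lemma icc_sum_bound (k : ℕ) (hk : 1 ≤ k) :
    6 * (∑ d ∈ Finset.Icc 1 k, (2 ^ (d - 1) + 1) * 4 ^ (k - d)) ≤ 5 * 4 ^ k := by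
  have hre : (∑ d ∈ Finset.Icc 1 k, (2 ^ (d - 1) + 1) * 4 ^ (k - d))
      = ∑ i ∈ Finset.range k, (2 ^ i + 1) * 4 ^ (k - 1 - i) := by
    apply Finset.sum_nbij' (fun d => d - 1) (fun i => i + 1)
    · intro d hd; rw [Finset.mem_Icc] at hd; rw [Finset.mem_range]; omega
    · intro i hi; rw [Finset.mem_range] at hi; rw [Finset.mem_Icc]; omega
    · intro d hd; rw [Finset.mem_Icc] at hd; omega
    · intro i hi; omega
    · intro d hd
      rw [Finset.mem_Icc] at hd
      congr 2 <;> omega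
  have hsplit : (∑ i ∈ Finset.range k, (2 ^ i + 1) * 4 ^ (k - 1 - i))
      = (∑ i ∈ Finset.range k, 2 ^ i * 4 ^ (k - 1 - i))
        + ∑ i ∈ Finset.range k, 4 ^ (k - 1 - i) := by
    rw [← Finset.sum_add_distrib]
    exact Finset.sum_congr rfl fun i _ => by ring
  have h1 : (∑ i ∈ Finset.range k, 2 ^ i * 4 ^ (k - 1 - i))
      = ∑ j ∈ Finset.Icc (k - 1) (2 * k - 2), 2 ^ j := by
    apply Finset.sum_nbij' (fun i => 2 * k - 2 - i) (fun j => 2 * k - 2 - j)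
    · intro i hi; rw [Finset.mem_range] at hi; rw [Finset.mem_Icc]; omega
    · intro j hj; rw [Finset.mem_Icc] at hj; rw [Finset.mem_range]; omega
    · intro i hi; rw [Finset.mem_range] at hi; omega
    · intro j hj; rw [Finset.mem_Icc] at hj; omega
    · intro i hi
      rw [Finset.mem_range] at hi
      have h4 : (4:ℕ) = 2 ^ 2 := by norm_num
      rw [h4, ← pow_mul, ← pow_add]
      congr 1
      omega
  have h1b : (∑ j ∈ Finset.Icc (k - 1) (2 * k - 2), 2 ^ j)
      ≤ ∑ j ∈ Finset.range (2 * k - 1), 2 ^ j := by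
    apply Finset.sum_le_sum_of_subset
    intro j hj; rw [Finset.mem_Icc] at hj; rw [Finset.mem_range]; omega
  have h1c := sum_range_two_pow (2 * k - 1)
  have h2 : (∑ i ∈ Finset.range k, 4 ^ (k - 1 - i)) = ∑ i ∈ Finset.range k, 4 ^ i := by
    rw [← Finset.sum_range_reflect (fun i => (4:ℕ) ^ i) k]
  have h2b := sum_range_four_pow k
  have hp1 : (2:ℕ) ^ (2 * k - 1) * 2 = 4 ^ k := by
    rw [← pow_succ]
    have h4 : (4:ℕ) = 2 ^ 2 := by norm_num
    rw [h4, ← pow_mul]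
    congr 1
    omega
  rw [hre, hsplit, h1, h2]
  omega

/-- The main sieve lemma. -/
lemma sieve (k m : ℕ) (hk4 : 4 ≤ k) (hkm : k + 1 ≤ m) (hm8 : 8 * m < 2 ^ k)
    (A B : R2) (hA : A.natDegree = m) :
    ∃ α β : R2, α.degree < (k : ℕ∞) ∧ β.degree < (k : ℕ∞) ∧ IsCoprime (A + α) (B + β) := by
  classical
  set V := VF k with hV
  set T : Finset (R2 × R2) := V ×ˢ V with hT
  have hAne : A ≠ 0 := by
    intro h0
    rw [h0, Polynomial.natDegree_zero] at hA
    omega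
  have hAdeg : A.degree = (m : ℕ∞) := by
    rw [← hA]
    exact Polynomial.degree_eq_natDegree hAne
  have hAα : ∀ α ∈ V, (A + α) ≠ 0 ∧ (A + α).natDegree = m := by
    intro α hα
    have hαd : α.degree < (m : ℕ∞) := by
      refine lt_of_lt_of_le (mem_VF.mp hα) ?_
      exact_mod_cast Nat.cast_le.mpr (by omega)
    have hd : (A + α).degree = A.degree := by
      rw [add_comm]
      exact Polynomial.degree_add_eq_right_of_degree_lt (by rw [hAdeg]; exact hαd)
    constructor
    · intro h0
      rw [h0, Polynomial.degree_zero, hAdeg] at hd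
      exact WithBot.bot_ne_coe hd
    · rw [← hA]
      exact Polynomial.natDegree_eq_of_degree_eq hd
  set Bad := T.filter (fun z => ¬ IsCoprime (A + z.1) (B + z.2)) with hBad
  have main : Bad.card < T.card := by
    -- the prime witness for each bad pair
    have witness : ∀ z ∈ Bad, ∃ p : R2, Irreducible p ∧ p ∣ A + z.1 ∧ p ∣ B + z.2 := by
      intro z hz
      obtain ⟨hzT, hznc⟩ := Finset.mem_filter.mp hz
      obtain ⟨hz1, hz2⟩ := Finset.mem_product.mp hzT
      set d := EuclideanDomain.gcd (A + z.1) (B + z.2) with hd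
      have hdu : ¬ IsUnit d := fun h => hznc (EuclideanDomain.gcd_isUnit_iff.mp h)
      have hdne : d ≠ 0 := by
        intro h0
        have := EuclideanDomain.gcd_eq_zero_iff.mp (hd ▸ h0)
        exact (hAα z.1 hz1).1 this.1
      obtain ⟨p, hpirr, hpd⟩ := WfDvdMonoid.exists_irreducible_factor hdu hdne
      exact ⟨p, hpirr, hpd.trans (EuclideanDomain.gcd_dvd_left _ _),
        hpd.trans (EuclideanDomain.gcd_dvd_right _ _)⟩
    set SB := T.filter (fun z => ∃ p : R2, Irreducible p ∧ p.natDegree ≤ k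
      ∧ p ∣ A + z.1 ∧ p ∣ B + z.2) with hSB
    set LB := T.filter (fun z => ∃ p : R2, Irreducible p ∧ k < p.natDegree
      ∧ p ∣ A + z.1 ∧ p ∣ B + z.2) with hLB
    have hBadsub : Bad ⊆ SB ∪ LB := by
      intro z hz
      obtain ⟨p, hpirr, hp1, hp2⟩ := witness z hz
      have hzT := (Finset.mem_filter.mp hz).1
      rcases le_or_gt p.natDegree k with h | h
      · exact Finset.mem_union_left _ (Finset.mem_filter.mpr ⟨hzT, p, hpirr, h, hp1, hp2⟩)
      · exact Finset.mem_union_right _ (Finset.mem_filter.mpr ⟨hzT, p, hpirr, h, hp1, hp2⟩)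
    -- small primes
    set P := (VF (k+1)).filter (fun p => Irreducible p) with hP
    have hPk : ∀ p ∈ P, Irreducible p ∧ p ≠ 0 ∧ 1 ≤ p.natDegree ∧ p.natDegree ≤ k := by
      intro p hp
      obtain ⟨hpv, hpirr⟩ := Finset.mem_filter.mp hp
      have hpne : p ≠ 0 := hpirr.ne_zero
      refine ⟨hpirr, hpne, hpirr.natDegree_pos, ?_⟩
      have hlt : p.natDegree < k + 1 :=
        (Polynomial.natDegree_lt_iff_degree_lt hpne).mpr (by exact_mod_cast mem_VF.mp hpv)
      omega
    have hSBsub : SB ⊆ P.biUnion (fun p => T.filter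
        (fun z => p ∣ A + z.1 ∧ p ∣ B + z.2)) := by
      intro z hz
      obtain ⟨hzT, p, hpirr, hpk, hp1, hp2⟩ := Finset.mem_filter.mp hz
      apply Finset.mem_biUnion.mpr
      refine ⟨p, ?_, Finset.mem_filter.mpr ⟨hzT, hp1, hp2⟩⟩
      apply Finset.mem_filter.mpr
      refine ⟨mem_VF_of_degree_lt ?_, hpirr⟩
      apply lt_of_le_of_lt Polynomial.degree_le_natDegree
      exact WithBot.coe_lt_coe.mpr (show p.natDegree < k + 1 by omega)
    have hfib : ∀ p ∈ P, (T.filter (fun z => p ∣ A + z.1 ∧ p ∣ B + z.2)).card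
        ≤ 4 ^ (k - p.natDegree) := by
      intro p hp
      obtain ⟨hpirr, hpne, hp1, hpk⟩ := hPk p hp
      have hsub : T.filter (fun z => p ∣ A + z.1 ∧ p ∣ B + z.2)
          ⊆ (V.filter (fun γ => p ∣ A + γ)) ×ˢ (V.filter (fun γ => p ∣ B + γ)) := by
        intro z hz
        obtain ⟨hzT, hz1, hz2⟩ := Finset.mem_filter.mp hz
        obtain ⟨hv1, hv2⟩ := Finset.mem_product.mp hzT
        exact Finset.mem_product.mpr ⟨Finset.mem_filter.mpr ⟨hv1, hz1⟩,
          Finset.mem_filter.mpr ⟨hv2, hz2⟩⟩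
      calc (T.filter (fun z => p ∣ A + z.1 ∧ p ∣ B + z.2)).card
          ≤ ((V.filter (fun γ => p ∣ A + γ)) ×ˢ (V.filter (fun γ => p ∣ B + γ))).card :=
            Finset.card_le_card hsub
        _ = (V.filter (fun γ => p ∣ A + γ)).card * (V.filter (fun γ => p ∣ B + γ)).card :=
            Finset.card_product _ _
        _ ≤ 2 ^ (k - p.natDegree) * 2 ^ (k - p.natDegree) :=
            Nat.mul_le_mul (fiber_bound k A p hpne hpk) (fiber_bound k B p hpne hpk)
        _ = 4 ^ (k - p.natDegree) := by norm_num [← mul_pow]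
    have hSBcard : SB.card ≤ ∑ p ∈ P, 4 ^ (k - p.natDegree) :=
      le_trans (Finset.card_le_card hSBsub)
        (le_trans (Finset.card_biUnion_le) (Finset.sum_le_sum hfib))
    have hsmall : 6 * SB.card ≤ 5 * 4 ^ k := by
      have hmaps : ∀ p ∈ P, p.natDegree ∈ Finset.Icc 1 k := by
        intro p hp
        obtain ⟨_, _, h1, h2⟩ := hPk p hp
        rw [Finset.mem_Icc]; exact ⟨h1, h2⟩
      have hfw := Finset.sum_fiberwise_of_maps_to hmaps (fun p => 4 ^ (k - p.natDegree))
      have hinner : ∀ d ∈ Finset.Icc 1 k,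
          (∑ p ∈ P.filter (fun p => p.natDegree = d), 4 ^ (k - p.natDegree))
            ≤ (2 ^ (d - 1) + 1) * 4 ^ (k - d) := by
        intro d hd
        rw [Finset.mem_Icc] at hd
        have hcongr : ∀ p ∈ P.filter (fun p => p.natDegree = d),
            4 ^ (k - p.natDegree) = 4 ^ (k - d) := by
          intro p hp
          rw [(Finset.mem_filter.mp hp).2]
        rw [Finset.sum_congr rfl hcongr, Finset.sum_const, smul_eq_mul]
        exact Nat.mul_le_mul_right _ (irred_count k d hd.1)
      calc 6 * SB.card ≤ 6 * ∑ p ∈ P, 4 ^ (k - p.natDegree) := by omega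
        _ = 6 * ∑ d ∈ Finset.Icc 1 k, ∑ p ∈ P.filter (fun p => p.natDegree = d),
              4 ^ (k - p.natDegree) := by rw [hfw]
        _ ≤ 6 * ∑ d ∈ Finset.Icc 1 k, (2 ^ (d - 1) + 1) * 4 ^ (k - d) :=
            Nat.mul_le_mul_left _ (Finset.sum_le_sum hinner)
        _ ≤ 5 * 4 ^ k := icc_sum_bound k (by omega)
    -- large primes
    set PL := V.biUnion (fun α => ((UniqueFactorizationMonoid.normalizedFactors (A + α)).toFinset.filter
        (fun p => k < p.natDegree))) with hPL
    have hLBcard : LB.card ≤ PL.card := by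
      apply Finset.card_le_card_of_injOn
        (fun z => if h : (∃ p : R2, Irreducible p ∧ k < p.natDegree
          ∧ p ∣ A + z.1 ∧ p ∣ B + z.2) then h.choose else 1)
      · intro z hz
        obtain ⟨hzT, hex⟩ := Finset.mem_filter.mp hz
        obtain ⟨hz1, hz2⟩ := Finset.mem_product.mp hzT
        dsimp only
        rw [dif_pos hex]
        obtain ⟨hpirr, hpk, hp1, hp2⟩ := hex.choose_spec
        set p := hex.choose
        apply Finset.mem_biUnion.mpr
        refine ⟨z.1, hz1, ?_⟩
        apply Finset.mem_filter.mpr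
        refine ⟨?_, hpk⟩
        rw [Multiset.mem_toFinset]
        obtain ⟨q, hq, hassoc⟩ := UniqueFactorizationMonoid.exists_mem_normalizedFactors_of_dvd
          (hAα z.1 hz1).1 hpirr hp1
        rwa [associated_eq hassoc]
      · intro z hz z' hz' heq
        obtain ⟨hzT, hex⟩ := Finset.mem_filter.mp hz
        obtain ⟨hzT', hex'⟩ := Finset.mem_filter.mp hz'
        dsimp only at heq
        rw [dif_pos hex, dif_pos hex'] at heq
        obtain ⟨hpirr, hpk, hp1, hp2⟩ := hex.choose_spec
        obtain ⟨hpirr', hpk', hp1', hp2'⟩ := hex'.choose_spec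
        rw [heq] at hpirr hpk hp1 hp2
        set p := hex'.choose
        obtain ⟨hv1, hv2⟩ := Finset.mem_product.mp hzT
        obtain ⟨hv1', hv2'⟩ := Finset.mem_product.mp hzT'
        have hkey : ∀ γ γ' : R2, γ ∈ V → γ' ∈ V → p ∣ A + γ → p ∣ A + γ' → γ = γ' := by
          intro γ γ' hγ hγ' h1 h2
          have hdvd : p ∣ γ - γ' := by
            have := dvd_sub h1 h2
            simpa using this
          have hdeg : (γ - γ').natDegree < p.natDegree := by
            rcases eq_or_ne (γ - γ') 0 with h0 | h0
            · rw [h0, Polynomial.natDegree_zero]; omega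
            · have : (γ - γ').degree < (k : ℕ∞) :=
                lt_of_le_of_lt (Polynomial.degree_sub_le _ _)
                  (max_lt (mem_VF.mp hγ) (mem_VF.mp hγ'))
              have := (Polynomial.natDegree_lt_iff_degree_lt h0).mpr this
              omega
          have := Polynomial.eq_zero_of_dvd_of_natDegree_lt hdvd hdeg
          exact sub_eq_zero.mp this
        have hkeyB : ∀ γ γ' : R2, γ ∈ V → γ' ∈ V → p ∣ B + γ → p ∣ B + γ' → γ = γ' := by
          intro γ γ' hγ hγ' h1 h2
          have hdvd : p ∣ γ - γ' := by
            have := dvd_sub h1 h2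
            simpa using this
          have hdeg : (γ - γ').natDegree < p.natDegree := by
            rcases eq_or_ne (γ - γ') 0 with h0 | h0
            · rw [h0, Polynomial.natDegree_zero]; omega
            · have : (γ - γ').degree < (k : ℕ∞) :=
                lt_of_le_of_lt (Polynomial.degree_sub_le _ _)
                  (max_lt (mem_VF.mp hγ) (mem_VF.mp hγ'))
              have := (Polynomial.natDegree_lt_iff_degree_lt h0).mpr this
              omega
          have := Polynomial.eq_zero_of_dvd_of_natDegree_lt hdvd hdeg
          exact sub_eq_zero.mp this
        exact Prod.ext (hkey z.1 z'.1 hv1 hv1' hp1 hp1') (hkeyB z.2 z'.2 hv2 hv2' hp2 hp2')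
    have hPLcard : PL.card ≤ 2 ^ k * (m / (k + 1)) := by
      calc PL.card ≤ ∑ α ∈ V, ((UniqueFactorizationMonoid.normalizedFactors (A + α)).toFinset.filter
            (fun p => k < p.natDegree)).card := Finset.card_biUnion_le
        _ ≤ ∑ _α ∈ V, m / (k + 1) := by
            apply Finset.sum_le_sum
            intro α hα
            exact large_factors_bound k m (A + α) (hAα α hα).1 (le_of_eq (hAα α hα).2)
        _ = 2 ^ k * (m / (k + 1)) := by
            rw [Finset.sum_const, smul_eq_mul, hV, card_VF]
    have hmk : m / (k + 1) ≤ 2 ^ (k - 4) := by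
      have h1 : m / (k + 1) ≤ m / 5 := Nat.div_le_div_left (by omega) (by omega)
      have h2 : m ≤ 2 ^ k / 8 := (Nat.le_div_iff_mul_le (by omega)).mpr (by omega)
      have h3 : m / 5 ≤ 2 ^ k / 8 / 5 := by
        exact le_trans (Nat.div_le_div_right h2) (le_refl _)
      have h4 : (2:ℕ) ^ k / 8 / 5 = 2 ^ k / 40 := by rw [Nat.div_div_eq_div_mul]
      have h5 : (2:ℕ) ^ k / 40 ≤ 2 ^ k / 16 := Nat.div_le_div_left (by omega) (by omega)
      have h6 : (2:ℕ) ^ k / 16 = 2 ^ (k - 4) := by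
        have : (2:ℕ) ^ k = 2 ^ (k - 4) * 16 := by
          rw [show (16:ℕ) = 2 ^ 4 from by norm_num, ← pow_add]
          congr 1
          omega
        omega
      omega
    have hLBfinal : 6 * LB.card ≤ 6 * 4 ^ (k - 2) := by
      have : 2 ^ k * 2 ^ (k - 4) = 4 ^ (k - 2) := by
        rw [show (4:ℕ) = 2 ^ 2 from by norm_num, ← pow_mul, ← pow_add]
        congr 1
        omega
      have hle : LB.card ≤ 4 ^ (k - 2) := by
        calc LB.card ≤ 2 ^ k * (m / (k + 1)) := le_trans hLBcard hPLcard
          _ ≤ 2 ^ k * 2 ^ (k - 4) := Nat.mul_le_mul_left _ hmk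
          _ = 4 ^ (k - 2) := this
      omega
    have hTcard : T.card = 4 ^ k := by
      rw [hT, Finset.card_product, hV, card_VF, ← mul_pow]
      norm_num
    have h16 : (4:ℕ) ^ k = 16 * 4 ^ (k - 2) := by
      rw [show (16:ℕ) = 4 ^ 2 from by norm_num, ← pow_add]
      congr 1
      omega
    have hcard2 : Bad.card ≤ SB.card + LB.card :=
      le_trans (Finset.card_le_card hBadsub) (Finset.card_union_le _ _)
    have hlpos : 0 < 4 ^ (k - 2) := by positivity
    omega
  have : ¬ (T ⊆ Bad) := by
    intro hsub
    have := Finset.card_le_card hsub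
    omega
  obtain ⟨z, hzT, hzB⟩ := Finset.not_subset.mp this
  obtain ⟨hz1, hz2⟩ := Finset.mem_product.mp hzT
  have hcop : IsCoprime (A + z.1) (B + z.2) := by
    by_contra hnc
    exact hzB (Finset.mem_filter.mpr ⟨hzT, hnc⟩)
  exact ⟨z.1, z.2, mem_VF.mp hz1, mem_VF.mp hz2, hcop⟩


lemma support_card_le {γ : R2} {k : ℕ} (h : γ.degree < (k : ℕ∞)) (hk : 1 ≤ k) :
    γ.support.card ≤ k := by
  rcases eq_or_ne γ 0 with rfl | h0
  · simp
  have hnd : γ.natDegree < k := (Polynomial.natDegree_lt_iff_degree_lt h0).mpr h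
  have hsub : γ.support ⊆ Finset.range k := by
    intro j hj
    rw [Finset.mem_range]
    have := Polynomial.le_natDegree_of_ne_zero (Polynomial.mem_support_iff.mp hj)
    omega
  exact le_trans (Finset.card_le_card hsub) (by rw [Finset.card_range])

lemma support_expand_le (γ : R2) :
    (Polynomial.expand (ZMod 2) 2 γ).support.card ≤ γ.support.card := by
  apply Finset.card_le_card_of_injOn (fun j => j / 2)
  · intro j hj
    rw [Finset.mem_coe, Polynomial.mem_support_iff, Polynomial.coeff_expand (by norm_num)] at hj
    rw [Finset.mem_coe, Polynomial.mem_support_iff]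
    by_cases h2 : 2 ∣ j
    · rwa [if_pos h2] at hj
    · rw [if_neg h2] at hj; exact absurd rfl hj
  · intro j hj j' hj' heq
    dsimp only at heq
    rw [Finset.mem_coe, Polynomial.mem_support_iff,
      Polynomial.coeff_expand (by norm_num)] at hj hj'
    by_cases h2 : 2 ∣ j
    · by_cases h2' : 2 ∣ j'
      · obtain ⟨a, rfl⟩ := h2; obtain ⟨b, rfl⟩ := h2'; omega
      · rw [if_neg h2'] at hj'; exact absurd rfl hj'
    · rw [if_neg h2] at hj; exact absurd rfl hj

lemma support_X_mul_le (γ : R2) : (X * γ).support.card ≤ γ.support.card := by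
  apply Finset.card_le_card_of_injOn (fun j => j - 1)
  · intro j hj
    rw [Finset.mem_coe, Polynomial.mem_support_iff, coeff_X_mul'] at hj
    rw [Finset.mem_coe, Polynomial.mem_support_iff]
    by_cases h0 : j = 0
    · rw [if_pos h0] at hj; exact absurd rfl hj
    · rwa [if_neg h0] at hj
  · intro j hj j' hj' heq
    dsimp only at heq
    rw [Finset.mem_coe, Polynomial.mem_support_iff, coeff_X_mul'] at hj hj'
    by_cases h0 : j = 0
    · rw [if_pos h0] at hj; exact absurd rfl hj
    by_cases h0' : j' = 0
    · rw [if_pos h0'] at hj'; exact absurd rfl hj'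
    omega

lemma natDeg_le_of_degree_lt {γ : R2} {k : ℕ} (h : γ.degree < (k : ℕ∞)) (hk : 1 ≤ k) :
    γ.natDegree ≤ k - 1 := by
  rcases eq_or_ne γ 0 with rfl | h0
  · simp
  · have := (Polynomial.natDegree_lt_iff_degree_lt h0).mpr h
    omega

lemma pow_dom : ∀ j : ℕ, 12 ≤ j → j + 5 ≤ 2 ^ (j - 1) := by
  intro j hj
  induction j with
  | zero => omega
  | succ i ih =>
    rcases Nat.lt_or_ge i 12 with h | h
    · interval_cases i <;> simp <;> omega
    · have := ih (by omega)
      have h1 : (2:ℕ) ^ (i + 1 - 1) = 2 * 2 ^ (i - 1) := by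
        rw [← pow_succ']
        congr 1
        omega
      omega

noncomputable def length2 (h : Polynomial (ZMod 2)) : ℕ :=
  h.support.card

theorem stmt_1 (ε : ℝ) (hε : 0 < ε) :
    ∃ N : ℕ, ∀ n : ℕ, N ≤ n →
      ∀ f : Polynomial (ZMod 2), f.natDegree = n →
        ∃ g : Polynomial (ZMod 2), Squarefree g ∧ g.natDegree = n ∧
          (length2 (f - g) : ℝ) ≤ Real.log n ^ (2 * Real.log 2 + ε) := by
  classical
  refine ⟨2 ^ 100, ?_⟩
  intro n hn f hf
  -- basic numerics
  have hn0 : n ≠ 0 := by positivity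
  set L := Nat.log 2 n with hLdef
  have hL : 100 ≤ L := (Nat.le_log_iff_pow_le (b := 2) (by norm_num) hn0).mpr hn
  have h2L : 2 ^ L ≤ n := Nat.pow_log_le_self 2 hn0
  have hnlt : n < 2 ^ (L + 1) := Nat.lt_pow_succ_log_self (by norm_num) n
  set k := L + 4 with hkdef
  set m := n / 2 with hmdef
  have hk4 : 4 ≤ k := by omega
  have hkm : k + 1 ≤ m := by
    have hdom := pow_dom L (by omega)
    have hpow : (2:ℕ) ^ L = 2 ^ (L - 1) * 2 := by
      rw [← pow_succ]
      congr 1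
      omega
    omega
  have hm8 : 8 * m < 2 ^ k := by
    have hp4 : (2:ℕ) ^ k = 16 * 2 ^ L := by rw [hkdef, pow_add]; ring
    have hp1 : (2:ℕ) ^ (L + 1) = 2 * 2 ^ L := by rw [pow_add]; ring
    omega
  have hfne : f ≠ 0 := by
    intro h0
    rw [h0, Polynomial.natDegree_zero] at hf
    omega
  have hlead : f.coeff n ≠ 0 := by
    rw [← hf, Polynomial.coeff_natDegree]
    exact Polynomial.leadingCoeff_ne_zero.mpr hfne
  -- get the coprime perturbation
  have key : ∃ α β : R2, α.degree < (k : ℕ∞) ∧ β.degree < (k : ℕ∞)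
      ∧ IsCoprime (evenP f + α) (oddP f + β) := by
    rcases Nat.even_or_odd n with he | ho
    · have hnm : n = 2 * m := by
        obtain ⟨r, hr⟩ := he
        omega
      have hAdeg : (evenP f).natDegree = m := by
        apply le_antisymm
        · apply Polynomial.natDegree_le_iff_coeff_eq_zero.mpr
          intro i hi
          rw [coeff_evenP]
          apply Polynomial.coeff_eq_zero_of_natDegree_lt
          omega
        · apply Polynomial.le_natDegree_of_ne_zero
          rw [coeff_evenP, ← hnm]
          exact hlead
      obtain ⟨α, β, h1, h2, h3⟩ := sieve k m hk4 hkm hm8 (evenP f) (oddP f) hAdeg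
      exact ⟨α, β, h1, h2, h3⟩
    · have hnm : n = 2 * m + 1 := by
        obtain ⟨r, hr⟩ := ho
        omega
      have hBdeg : (oddP f).natDegree = m := by
        apply le_antisymm
        · apply Polynomial.natDegree_le_iff_coeff_eq_zero.mpr
          intro i hi
          rw [coeff_oddP]
          apply Polynomial.coeff_eq_zero_of_natDegree_lt
          omega
        · apply Polynomial.le_natDegree_of_ne_zero
          rw [coeff_oddP, ← hnm]
          exact hlead
      obtain ⟨β, α, h1, h2, h3⟩ := sieve k m hk4 hkm hm8 (oddP f) (evenP f) hBdeg
      exact ⟨α, β, h2, h1, h3.symm⟩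
  obtain ⟨α, β, hαd, hβd, hcop⟩ := key
  set g := Polynomial.expand (ZMod 2) 2 (evenP f + α) + X * Polynomial.expand (ZMod 2) 2 (oddP f + β)
    with hgdef
  have hsf : Squarefree g := squarefree_comb hcop
  set e := Polynomial.expand (ZMod 2) 2 α + X * Polynomial.expand (ZMod 2) 2 β with hedef
  have hfg : g = f + e := by
    have hd := decomp f
    have h1 : g = (Polynomial.expand (ZMod 2) 2 (evenP f)
        + X * Polynomial.expand (ZMod 2) 2 (oddP f)) + e := by
      rw [hgdef, hedef, map_add, map_add]
      ring
    rw [h1, hd]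
  have hend : e.natDegree ≤ 2 * k - 1 := by
    have hα : α.natDegree ≤ k - 1 := natDeg_le_of_degree_lt hαd (by omega)
    have hβ : β.natDegree ≤ k - 1 := natDeg_le_of_degree_lt hβd (by omega)
    have h1 : (Polynomial.expand (ZMod 2) 2 α).natDegree ≤ 2 * k - 2 := by
      rw [Polynomial.natDegree_expand]
      omega
    have h2 : (X * Polynomial.expand (ZMod 2) 2 β).natDegree ≤ 2 * k - 1 := by
      apply le_trans (Polynomial.natDegree_mul_le)
      rw [Polynomial.natDegree_expand, Polynomial.natDegree_X]
      omega
    rw [hedef]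
    exact le_trans (Polynomial.natDegree_add_le _ _) (by omega)
  have hedeg : e.degree < f.degree := by
    rw [Polynomial.degree_eq_natDegree hfne, hf]
    apply lt_of_le_of_lt Polynomial.degree_le_natDegree
    exact_mod_cast (show e.natDegree < n by omega)
  have hgd : g.natDegree = n := by
    have : g.degree = f.degree := by
      rw [hfg, add_comm]
      exact Polynomial.degree_add_eq_right_of_degree_lt hedeg
    rw [← hf]
    exact Polynomial.natDegree_eq_of_degree_eq this
  refine ⟨g, hsf, hgd, ?_⟩
  -- support bound
  have hsupp : length2 (f - g) ≤ 2 * k := by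
    have hfmg : f - g = -e := by rw [hfg]; ring
    have h1 : (f - g).support.card = e.support.card := by
      rw [hfmg, Polynomial.support_neg]
    have h2 : e.support.card ≤ 2 * k := by
      rw [hedef]
      apply le_trans (Finset.card_le_card (Polynomial.support_add))
      apply le_trans (Finset.card_union_le _ _)
      have ha : (Polynomial.expand (ZMod 2) 2 α).support.card ≤ k :=
        le_trans (support_expand_le α) (support_card_le hαd (by omega))
      have hb : (X * Polynomial.expand (ZMod 2) 2 β).support.card ≤ k :=
        le_trans (support_X_mul_le _)
          (le_trans (support_expand_le β) (support_card_le hβd (by omega)))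
      omega
    rw [length2, h1]
    exact h2
  -- the real-number estimate
  set x := Real.log n with hxdef
  have hlog2 : (0.6931471803 : ℝ) < Real.log 2 := Real.log_two_gt_d9
  have hx64 : (64 : ℝ) ≤ x := by
    have h1 : ((2:ℝ) ^ (100:ℕ)) ≤ (n:ℝ) := by exact_mod_cast hn
    have h2 : Real.log ((2:ℝ) ^ (100:ℕ)) ≤ x := by
      rw [hxdef]
      apply Real.log_le_log (by positivity) h1
    rw [Real.log_pow] at h2
    push_cast at h2
    linarith
  have hLx : (L : ℝ) * Real.log 2 ≤ x := by
    have h1 : ((2:ℝ) ^ L) ≤ (n:ℝ) := by exact_mod_cast h2L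
    have h2 : Real.log ((2:ℝ) ^ L) ≤ x := by
      rw [hxdef]
      apply Real.log_le_log (by positivity) h1
    rwa [Real.log_pow] at h2
  have h2k : (2 * k : ℝ) ≤ 4 * x := by
    have hL23 : (L : ℝ) * (2/3) ≤ (L : ℝ) * Real.log 2 := by
      apply mul_le_mul_of_nonneg_left _ (by positivity)
      linarith
    have hk2 : (2 * k : ℝ) = 2 * (L:ℝ) + 8 := by
      rw [hkdef]
      push_cast
      ring
    linarith
  have hrpow : 4 * x ≤ x ^ (2 * Real.log 2 + ε) := by
    have hx1 : (1:ℝ) ≤ x := by linarith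
    have hx0 : (0:ℝ) < x := by linarith
    have hexp : (4:ℝ)/3 ≤ 2 * Real.log 2 + ε := by linarith
    have s1 : x ^ ((4:ℝ)/3) ≤ x ^ (2 * Real.log 2 + ε) :=
      Real.rpow_le_rpow_of_exponent_le hx1 hexp
    have s2 : x ^ ((4:ℝ)/3) = x ^ ((1:ℝ)/3) * x := by
      have : (4:ℝ)/3 = 1/3 + 1 := by norm_num
      rw [this, Real.rpow_add hx0, Real.rpow_one]
    have s3 : (4:ℝ) ≤ x ^ ((1:ℝ)/3) := by
      have h64 : ((64:ℝ)) ^ ((1:ℝ)/3) ≤ x ^ ((1:ℝ)/3) :=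
        Real.rpow_le_rpow (by norm_num) hx64 (by norm_num)
      have h4 : ((64:ℝ)) ^ ((1:ℝ)/3) = 4 := by
        have h643 : (64:ℝ) = 4 ^ (3:ℕ) := by norm_num
        rw [h643, ← Real.rpow_natCast 4 3, ← Real.rpow_mul (by norm_num)]
        norm_num
      linarith [h64, h4.symm.le, h4.le]
    have s4 : 4 * x ≤ x ^ ((1:ℝ)/3) * x := by
      apply mul_le_mul_of_nonneg_right s3 (le_of_lt hx0)
    linarith [s1, s2.symm.le, s2.le]
  calc (length2 (f - g) : ℝ) ≤ (2 * k : ℝ) := by exact_mod_cast hsupp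
    _ ≤ 4 * x := h2k
    _ ≤ x ^ (2 * Real.log 2 + ε) := hrpow
end

section
/- Fix ε > 0. For all sufficiently large n, the following holds: for every polynomial f(x) ∈ ℤ[x] with deg f = n, there exists a polynomial g(x) ∈ ℤ[x] of degree n that is squarefree (not divisible by the square of any non-constant irreducible polynomial in ℤ[x]) such that L(f − g) ≤ (ln n)^{2 ln 2 + ε}. -/
/-- A polynomial in `ℤ[x]` is squarefree (in the sense of this paper) if it is not
divisible by the square of any non-constant irreducible polynomial in `ℤ[x]`. -/
def IntSquarefree (g : Polynomial ℤ) : Prop :=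
  ∀ p : Polynomial ℤ, Irreducible p → 0 < p.natDegree → ¬ p ^ 2 ∣ g

set_option maxHeartbeats 1000000

open Polynomial Finset
open scoped Classical

noncomputable section SqfAux

abbrev R2 := Polynomial (ZMod 2)

lemma zmod2_ne_zero (x : ZMod 2) (hx : x ≠ 0) : x = 1 := by revert x; decide

lemma zmod2_cases (x : ZMod 2) : x = 0 ∨ x = 1 := by revert x; decide

lemma R2_isUnit_eq_one {u : R2} (h : IsUnit u) : u = 1 := by
  obtain ⟨r, hr, rfl⟩ := Polynomial.isUnit_iff.mp h
  rw [zmod2_ne_zero r hr.ne_zero, Polynomial.C_1]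

lemma R2_assoc_eq {x y : R2} (h : Associated x y) : x = y := by
  obtain ⟨u, rfl⟩ := h
  rw [R2_isUnit_eq_one u.isUnit, mul_one]

lemma R2_monic {p : R2} (hp : p ≠ 0) : p.Monic := by
  have := Polynomial.leadingCoeff_ne_zero.mpr hp
  exact zmod2_ne_zero _ this

lemma R2_coeff_natDegree {p : R2} (hp : p ≠ 0) : p.coeff p.natDegree = 1 :=
  zmod2_ne_zero _ (Polynomial.leadingCoeff_ne_zero.mpr hp)

lemma R2_two_eq_zero : (2 : ZMod 2) = 0 := by decide

lemma R2_C2_eq_zero : (Polynomial.C (2 : ZMod 2) : R2) = 0 := by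
  rw [R2_two_eq_zero, Polynomial.C_0]

def psi (m : ℕ) (c : Fin m → ZMod 2) : R2 := ∑ i : Fin m, Polynomial.monomial i.val (c i)

lemma coeff_psi (m : ℕ) (c : Fin m → ZMod 2) (j : ℕ) :
    (psi m c).coeff j = if h : j < m then c ⟨j, h⟩ else 0 := by
  rw [psi, finset_sum_coeff]
  simp only [coeff_monomial]
  split
  · next h =>
    rw [Finset.sum_eq_single (⟨j, h⟩ : Fin m)]
    · simp
    · intro b _ hb
      rw [if_neg]
      intro hbj
      exact hb (by ext; simpa using hbj)
    · simp
  · next h =>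
    apply Finset.sum_eq_zero
    intro b _
    rw [if_neg]
    intro hbj
    exact h (hbj ▸ b.isLt)

def Vm (m : ℕ) : Finset R2 := Finset.image (psi m) Finset.univ

lemma mem_Vm_iff {m : ℕ} {u : R2} : u ∈ Vm m ↔ ∀ j, m ≤ j → u.coeff j = 0 := by
  constructor
  · rintro hu j hj
    obtain ⟨c, _, rfl⟩ := Finset.mem_image.mp hu
    rw [coeff_psi, dif_neg (by omega)]
  · intro hu
    refine Finset.mem_image.mpr ⟨fun i => u.coeff i.val, Finset.mem_univ _, ?_⟩
    ext j
    rw [coeff_psi]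
    split
    · rfl
    · next h => exact (hu j (by omega)).symm

lemma psi_injective (m : ℕ) : Function.Injective (psi m) := by
  intro c d h
  funext i
  have := congrArg (fun p => Polynomial.coeff p i.val) h
  simpa [coeff_psi, i.isLt] using this

lemma card_Vm (m : ℕ) : (Vm m).card = 2 ^ m := by
  rw [Vm, Finset.card_image_of_injective _ (psi_injective m), Finset.card_univ]
  simp [Fintype.card_fun]

lemma natDegree_lt_of_mem_Vm {m : ℕ} {u : R2} (hm : 1 ≤ m) (hu : u ∈ Vm m) : u.natDegree < m := by
  have := mem_Vm_iff.mp hu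
  have h2 : u.natDegree ≤ m - 1 := natDegree_le_iff_coeff_eq_zero.mpr (fun N hN => this N (by omega))
  omega


lemma card_filter_dvd (m : ℕ) (hm : 1 ≤ m) (E : R2) (p : R2) (hp : Irreducible p) :
    ((Vm m).filter (fun a => p ∣ E + a)).card ≤ 2 ^ (m - p.natDegree) := by
  classical
  set d := p.natDegree with hd
  have hpm : p.Monic := R2_monic hp.ne_zero
  have hdpos : 0 < d := hp.natDegree_pos
  set r : R2 := E %ₘ p with hr
  have hrdeg : r.natDegree ≤ d - 1 := by
    rcases eq_or_ne r 0 with h0 | h0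
    · simp [h0]
    · have h1 : r.degree < p.degree := degree_modByMonic_lt E hpm
      have h2 : r.natDegree < d := natDegree_lt_natDegree h0 h1
      omega
  rw [← card_Vm (m - d)]
  apply Finset.card_le_card_of_injOn (fun a => (a + r) /ₘ p)
  · intro a ha
    rw [Finset.mem_coe, Finset.mem_filter] at ha
    obtain ⟨haV, hdvd⟩ := ha
    have haD : a.natDegree < m := natDegree_lt_of_mem_Vm hm haV
    set s : R2 := a + r with hs
    have hps : p ∣ s := by
      have h1 : r + p * (E /ₘ p) = E := modByMonic_add_div E p
      have h2 : s = (E + a) - p * (E /ₘ p) := by linear_combination h1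
      rw [h2]
      exact dvd_sub hdvd (Dvd.intro _ rfl)
    have hsmod : s %ₘ p = 0 := (modByMonic_eq_zero_iff_dvd hpm).mpr hps
    have hst : s = p * (s /ₘ p) := by
      have := modByMonic_add_div s p
      rw [hsmod, zero_add] at this
      exact this.symm
    have hsdeg : s.natDegree ≤ m - 1 ∨ s.natDegree ≤ d - 1 := by
      have h6 : s.natDegree ≤ max (m-1) (d-1) :=
        le_trans (natDegree_add_le a r) (max_le_max (by omega) hrdeg)
      exact le_max_iff.mp h6
    set t : R2 := s /ₘ p with ht
    rw [Finset.mem_coe, mem_Vm_iff]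
    intro j hj
    change t.coeff j = 0
    rcases eq_or_ne t 0 with h0 | h0
    · simp [h0]
    · have hpne : p ≠ 0 := hp.ne_zero
      have : s.natDegree = d + t.natDegree := by
        rw [hst, natDegree_mul hpne h0]
      apply coeff_eq_zero_of_natDegree_lt
      omega
  · intro a ha a' ha' hEq
    rw [Finset.mem_coe, Finset.mem_filter] at ha ha'
    simp only at hEq
    have key : ∀ b : R2, b ∈ (Vm m) → p ∣ E + b → b = p * ((b + r) /ₘ p) - r := by
      intro b _ hdvd
      have h1 : r + p * (E /ₘ p) = E := modByMonic_add_div E p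
      have hps : p ∣ b + r := by
        have h2 : b + r = (E + b) - p * (E /ₘ p) := by linear_combination h1
        rw [h2]
        exact dvd_sub hdvd (Dvd.intro _ rfl)
      have hsmod : (b + r) %ₘ p = 0 := (modByMonic_eq_zero_iff_dvd hpm).mpr hps
      have := modByMonic_add_div (b + r) p
      rw [hsmod, zero_add] at this
      rw [this]
      ring
    rw [key a ha.1 ha.2, key a' ha'.1 ha'.2, hEq]


lemma R2_deg_one (p : R2) (hp : p.natDegree = 1) : p = X ∨ p = X + 1 := by
  have hne : p ≠ 0 := fun h => by simp [h] at hp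
  have hc1 : p.coeff 1 = 1 := by have := R2_coeff_natDegree hne; rwa [hp] at this
  have hform : p = X + C (p.coeff 0) := by
    ext j
    match j with
    | 0 => simp
    | 1 => simp [hc1]
    | (k+2) =>
      rw [coeff_eq_zero_of_natDegree_lt (by omega)]
      simp [coeff_X, coeff_C]
  rcases zmod2_cases (p.coeff 0) with h0 | h0
  · left; rw [hform, h0]; simp
  · right; rw [hform, h0]; simp

lemma card_filter_deg_one (P : Finset R2) :
    (P.filter (fun p => p.natDegree = 1)).card ≤ 2 := by
  have hsub : P.filter (fun p => p.natDegree = 1) ⊆ {X, X + 1} := by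
    intro p hp
    rw [Finset.mem_filter] at hp
    rcases R2_deg_one p hp.2 with h | h <;> simp [h]
  exact le_trans (Finset.card_le_card hsub) (Finset.card_insert_le _ _)

lemma card_filter_irred_deg (d : ℕ) (hd : 2 ≤ d) (P : Finset R2) (hP : ∀ p ∈ P, Irreducible p) :
    (P.filter (fun p => p.natDegree = d)).card ≤ 2 ^ (d - 1) := by
  have : (Finset.univ : Finset (Fin (d-1) → ZMod 2)).card = 2 ^ (d-1) := by
    simp [Fintype.card_fun]
  rw [← this]
  apply Finset.card_le_card_of_injOn (fun p => (fun i : Fin (d-1) => p.coeff (i.val + 1)))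
  · intro p _; exact Finset.mem_univ _
  · intro p hp p' hp' hEq
    rw [Finset.mem_coe, Finset.mem_filter] at hp hp'
    obtain ⟨hpP, hpd⟩ := hp
    obtain ⟨hpP', hpd'⟩ := hp'
    have hirr := hP p hpP
    have hirr' := hP p' hpP'
    have hc0 : ∀ q : R2, q ∈ P → q.natDegree = d → q.coeff 0 = 1 := by
      intro q hq hqd
      by_contra hne
      have h0 : q.coeff 0 = 0 := by rcases zmod2_cases (q.coeff 0) with h|h; exact h; exact absurd h hne
      have hX : (X : R2) ∣ q := X_dvd_iff.mpr h0
      obtain ⟨v, hv⟩ := hX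
      rcases (hP q hq).isUnit_or_isUnit hv with hu | hu
      · have h4 := Polynomial.natDegree_eq_zero_of_isUnit hu
        rw [natDegree_X] at h4
        exact absurd h4 one_ne_zero
      · rw [R2_isUnit_eq_one hu, mul_one] at hv
        rw [hv] at hqd
        simp at hqd
        omega
    have hne : p ≠ 0 := hirr.ne_zero
    have hne' : p' ≠ 0 := hirr'.ne_zero
    ext j
    rcases Nat.lt_or_ge j 1 with hj | hj
    · interval_cases j
      rw [hc0 p hpP hpd, hc0 p' hpP' hpd']
    rcases Nat.lt_or_ge j d with hjd | hjd
    · have := congrFun hEq ⟨j - 1, by omega⟩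
      simpa [Nat.sub_add_cancel hj] using this
    rcases Nat.eq_or_lt_of_le hjd with rfl | hjd'
    · have h1 := R2_coeff_natDegree hne
      have h2 := R2_coeff_natDegree hne'
      rw [hpd] at h1; rw [hpd'] at h2
      rw [h1, h2]
    · rw [coeff_eq_zero_of_natDegree_lt (by omega), coeff_eq_zero_of_natDegree_lt (by omega)]


lemma exists_irred_common (u v : R2) (hu : u ≠ 0) (h : ¬ IsCoprime u v) :
    ∃ p : R2, Irreducible p ∧ p ∣ u ∧ p ∣ v := by
  have hgu : ¬ IsUnit (EuclideanDomain.gcd u v) := fun hg => h (EuclideanDomain.gcd_isUnit_iff.mp hg)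
  have hg0 : EuclideanDomain.gcd u v ≠ 0 := by
    intro h0
    exact hu ((EuclideanDomain.gcd_eq_zero_iff.mp h0).1)
  obtain ⟨p, hp, hpd⟩ := WfDvdMonoid.exists_irreducible_factor hgu hg0
  exact ⟨p, hp, hpd.trans (EuclideanDomain.gcd_dvd_left u v), hpd.trans (EuclideanDomain.gcd_dvd_right u v)⟩

lemma mem_factors_toFinset {u p : R2} (hu : u ≠ 0) (hp : Irreducible p) (hdvd : p ∣ u) :
    p ∈ (UniqueFactorizationMonoid.factors u).toFinset := by
  obtain ⟨q, hq, hassoc⟩ := UniqueFactorizationMonoid.exists_mem_factors_of_dvd hu hp hdvd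
  rw [Multiset.mem_toFinset]
  rwa [R2_assoc_eq hassoc]

lemma card_factors_le {u : R2} (hu : u ≠ 0) :
    (UniqueFactorizationMonoid.factors u).toFinset.card ≤ u.natDegree := by
  refine le_trans (Multiset.toFinset_card_le _) ?_
  have hprod : (UniqueFactorizationMonoid.factors u).prod = u :=
    R2_assoc_eq (UniqueFactorizationMonoid.factors_prod hu)
  have hmon : ∀ f ∈ UniqueFactorizationMonoid.factors u, Monic f := by
    intro f hf
    exact R2_monic (UniqueFactorizationMonoid.irreducible_of_factor f hf).ne_zero
  have hdeg : u.natDegree = ((UniqueFactorizationMonoid.factors u).map natDegree).sum := by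
    conv_lhs => rw [← hprod]
    rw [Polynomial.natDegree_multiset_prod_of_monic _ hmon]
  rw [hdeg]
  have : ∀ x ∈ UniqueFactorizationMonoid.factors u, 1 ≤ natDegree x := by
    intro x hx
    exact (UniqueFactorizationMonoid.irreducible_of_factor x hx).natDegree_pos
  calc Multiset.card (UniqueFactorizationMonoid.factors u)
      = ((UniqueFactorizationMonoid.factors u).map (fun _ => 1)).sum := by
        simp [Multiset.sum_replicate]
    _ ≤ _ := Multiset.sum_map_le_sum_map _ _ (fun x hx => this x hx)

lemma sqf_geom_le (k : ℕ) : (∑ i ∈ Finset.range k, 2 ^ i) ≤ 2 ^ k := by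
  induction k with
  | zero => simp
  | succ k ih =>
    rw [Finset.sum_range_succ, pow_succ]
    omega


lemma exists_coprime_pert (n m : ℕ) (hm : 7 ≤ m) (hmn : m ≤ n)
    (hbig : 2 + 2 * n < 2 ^ (m - 2)) (E O : R2) (hE : E.natDegree ≤ n) (hO : O.natDegree ≤ n) :
    ∃ a ∈ Vm m, ∃ b ∈ Vm m, IsCoprime (E + a) (O + b) := by
  by_contra hcon
  push_neg at hcon
  set V := Vm m with hV
  set F : R2 := ∏ a ∈ V.filter (fun a => E + a ≠ 0), (E + a) with hF
  have hF0 : F ≠ 0 := by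
    rw [hF, Finset.prod_ne_zero_iff]
    intro a ha
    exact (Finset.mem_filter.mp ha).2
  set P : Finset R2 := ((UniqueFactorizationMonoid.factors F).toFinset.filter
      (fun p => Irreducible p)) with hP
  have hPirr : ∀ p ∈ P, Irreducible p := by
    intro p hp
    exact (Finset.mem_filter.mp hp).2
  -- cover
  have hcover : V ×ˢ V ⊆ ((({E} : Finset R2) ×ˢ V) ∪ (V ×ˢ ({O} : Finset R2))) ∪
      P.biUnion (fun p => (V.filter (fun a => p ∣ E + a)) ×ˢ (V.filter (fun b => p ∣ O + b))) := by
    rintro ⟨a, b⟩ hab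
    rw [Finset.mem_product] at hab
    obtain ⟨haV, hbV⟩ := hab
    have hncop := hcon a haV b hbV
    rcases eq_or_ne (E + a) 0 with hEa | hEa
    · apply Finset.mem_union_left
      apply Finset.mem_union_left
      rw [Finset.mem_product, Finset.mem_singleton]
      refine ⟨?_, hbV⟩
      have h1 : a = -E := eq_neg_of_add_eq_zero_right hEa
      rw [h1, CharTwo.neg_eq]
    · rcases eq_or_ne (O + b) 0 with hOb | hOb
      · apply Finset.mem_union_left
        apply Finset.mem_union_right
        rw [Finset.mem_product, Finset.mem_singleton]
        refine ⟨haV, ?_⟩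
        have h1 : b = -O := eq_neg_of_add_eq_zero_right hOb
        rw [h1, CharTwo.neg_eq]
      · obtain ⟨p, hpirr, hpa, hpb⟩ := exists_irred_common _ _ hEa hncop
        apply Finset.mem_union_right
        rw [Finset.mem_biUnion]
        refine ⟨p, ?_, ?_⟩
        · rw [hP, Finset.mem_filter]
          refine ⟨mem_factors_toFinset hF0 hpirr ?_, hpirr⟩
          exact dvd_trans hpa (Finset.dvd_prod_of_mem _ (Finset.mem_filter.mpr ⟨haV, hEa⟩))
        · rw [Finset.mem_product, Finset.mem_filter, Finset.mem_filter]
          exact ⟨⟨haV, hpa⟩, hbV, hpb⟩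
  -- cardinalities
  have hcardV : V.card = 2 ^ m := card_Vm m
  have hmain : (V ×ˢ V).card ≤ 2 ^ m + 2 ^ m +
      ∑ p ∈ P, ((V.filter (fun a => p ∣ E + a)) ×ˢ (V.filter (fun b => p ∣ O + b))).card := by
    refine le_trans (Finset.card_le_card hcover) ?_
    refine le_trans (Finset.card_union_le _ _) ?_
    gcongr
    · refine le_trans (Finset.card_union_le _ _) ?_
      rw [Finset.card_product, Finset.card_product]
      simp [hcardV]
    · exact Finset.card_biUnion_le
  -- termwise bound
  have hsum1 : ∑ p ∈ P, ((V.filter (fun a => p ∣ E + a)) ×ˢ (V.filter (fun b => p ∣ O + b))).card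
      ≤ ∑ p ∈ P, 2 ^ (m - p.natDegree) * 2 ^ (m - p.natDegree) := by
    apply Finset.sum_le_sum
    intro p hp
    rw [Finset.card_product]
    exact Nat.mul_le_mul (card_filter_dvd m (by omega) E p (hPirr p hp))
      (card_filter_dvd m (by omega) O p (hPirr p hp))
  -- split by degree
  set f : R2 → ℕ := fun p => 2 ^ (m - p.natDegree) * 2 ^ (m - p.natDegree) with hf
  have hsplit : ∑ p ∈ P, f p = (∑ p ∈ P.filter (fun p => p.natDegree ≤ m), f p)
      + ∑ p ∈ P.filter (fun p => ¬ p.natDegree ≤ m), f p :=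
    (Finset.sum_filter_add_sum_filter_not P _ f).symm
  -- big primes
  have hbigsum : ∑ p ∈ P.filter (fun p => ¬ p.natDegree ≤ m), f p ≤ 2 ^ m * n := by
    have h1 : ∀ p ∈ P.filter (fun p => ¬ p.natDegree ≤ m), f p = 1 := by
      intro p hp
      rw [Finset.mem_filter] at hp
      have : m - p.natDegree = 0 := by omega
      rw [hf]
      simp [this]
    rw [Finset.sum_congr rfl h1]
    simp only [Finset.sum_const, smul_eq_mul, mul_one]
    have h2 : (P.filter (fun p => ¬ p.natDegree ≤ m)).card ≤ P.card := Finset.card_filter_le _ _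
    have h3 : P.card ≤ (UniqueFactorizationMonoid.factors F).toFinset.card := Finset.card_filter_le _ _
    have h4 : F.natDegree ≤ 2 ^ m * n := by
      refine le_trans (Polynomial.natDegree_prod_le _ _) ?_
      have h5 : ∀ a ∈ V.filter (fun a => E + a ≠ 0), (E + a).natDegree ≤ n := by
        intro a ha
        rw [Finset.mem_filter] at ha
        refine le_trans (natDegree_add_le E a) (max_le hE ?_)
        have := natDegree_lt_of_mem_Vm (by omega) ha.1
        omega
      refine le_trans (Finset.sum_le_card_nsmul _ _ n h5) ?_
      rw [smul_eq_mul]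
      have : (V.filter (fun a => E + a ≠ 0)).card ≤ 2 ^ m := by
        rw [← hcardV]; exact Finset.card_filter_le _ _
      exact Nat.mul_le_mul_right n this
    have h3b := card_factors_le hF0
    omega
  -- small primes
  have hsmall : ∑ p ∈ P.filter (fun p => p.natDegree ≤ m), f p
      ≤ 2 * (2 ^ (m-1) * 2 ^ (m-1)) + 2 ^ (2*m-2) := by
    set P1 := P.filter (fun p => p.natDegree ≤ m) with hP1
    have hP1irr : ∀ p ∈ P1, Irreducible p := fun p hp => hPirr p (Finset.mem_of_mem_filter p hp)
    have hmaps : ∀ p ∈ P1, p.natDegree ∈ Finset.Icc 1 m := by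
      intro p hp
      rw [Finset.mem_Icc]
      refine ⟨(hP1irr p hp).natDegree_pos, ?_⟩
      rw [hP1, Finset.mem_filter] at hp
      exact hp.2
    rw [← Finset.sum_fiberwise_of_maps_to hmaps f]
    have hinner : ∀ d ∈ Finset.Icc 1 m, ∑ p ∈ P1.filter (fun p => p.natDegree = d), f p
        = (P1.filter (fun p => p.natDegree = d)).card * (2^(m-d) * 2^(m-d)) := by
      intro d hd
      rw [Finset.sum_congr rfl (fun p hp => ?_), Finset.sum_const, smul_eq_mul]
      rw [hf]
      simp only
      rw [(Finset.mem_filter.mp hp).2]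
    rw [Finset.sum_congr rfl hinner]
    have hsplit1 : Finset.Icc 1 m = insert 1 (Finset.Icc 2 m) := by
      ext j
      simp only [Finset.mem_Icc, Finset.mem_insert]
      omega
    rw [hsplit1, Finset.sum_insert (by simp)]
    have hterm1 : (P1.filter (fun p => p.natDegree = 1)).card * (2^(m-1) * 2^(m-1))
        ≤ 2 * (2^(m-1) * 2^(m-1)) :=
      Nat.mul_le_mul_right _ (card_filter_deg_one P1)
    have hterm2 : ∑ d ∈ Finset.Icc 2 m, (P1.filter (fun p => p.natDegree = d)).card * (2^(m-d) * 2^(m-d))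
        ≤ 2 ^ (2*m-2) := by
      have hstep : ∀ d ∈ Finset.Icc 2 m, (P1.filter (fun p => p.natDegree = d)).card * (2^(m-d) * 2^(m-d))
          ≤ 2 ^ (2*m-1-d) := by
        intro d hd
        rw [Finset.mem_Icc] at hd
        have hc := card_filter_irred_deg d hd.1 P1 hP1irr
        refine le_trans (Nat.mul_le_mul_right _ hc) (le_of_eq ?_)
        rw [← pow_add, ← pow_add]
        congr 1
        omega
      refine le_trans (Finset.sum_le_sum hstep) ?_
      have himg : ∑ d ∈ Finset.Icc 2 m, 2 ^ (2*m-1-d)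
          = ∑ j ∈ (Finset.Icc 2 m).image (fun d => 2*m-1-d), 2 ^ j := by
        rw [Finset.sum_image]
        intro x hx y hy hxy
        rw [Finset.mem_coe, Finset.mem_Icc] at hx hy
        simp only at hxy
        omega
      rw [himg]
      have hsub : (Finset.Icc 2 m).image (fun d => 2*m-1-d) ⊆ Finset.range (2*m-2) := by
        intro j hj
        rw [Finset.mem_image] at hj
        obtain ⟨d, hd, rfl⟩ := hj
        rw [Finset.mem_Icc] at hd
        rw [Finset.mem_range]
        omega
      refine le_trans (Finset.sum_le_sum_of_subset hsub) (sqf_geom_le _)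
    omega
  -- final contradiction
  have hcardVV : (V ×ˢ V).card = 2 ^ m * 2 ^ m := by
    rw [Finset.card_product, hcardV]
  set K := 2 ^ (m - 2) with hK
  have hKpos : 0 < K := Nat.pow_pos (by norm_num)
  have e1 : 4 * K = 2 ^ m := by
    rw [hK, show (4:ℕ) = 2^2 from rfl, ← pow_add]
    congr 1
    omega
  have e2 : 2 * K = 2 ^ (m-1) := by
    rw [hK, ← pow_succ']
    congr 1
    omega
  have e3 : 4 * (K * K) = 2 ^ (2*m-2) := by
    rw [hK, show (4:ℕ) = 2^2 from rfl, ← pow_add, ← pow_add]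
    congr 1
    omega
  have hchain : 2 ^ m * 2 ^ m ≤ 2 ^ m + 2 ^ m +
      (2 * (2 ^ (m-1) * 2 ^ (m-1)) + 2 ^ (2*m-2) + 2 ^ m * n) := by
    rw [← hcardVV]
    refine le_trans hmain ?_
    have := le_trans hsum1 (le_of_eq hsplit)
    omega
  rw [← e1, ← e3] at hchain
  have e4 : 2 ^ (m-1) * 2 ^ (m-1) = (2*K) * (2*K) := by rw [e2]
  rw [e4] at hchain
  have hx : K * (2 + 2*n) < K * K := (mul_lt_mul_iff_right₀ hKpos).mpr hbig
  have hdist : K * (2 + 2*n) = 2*K + 2*(K*n) := by ring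
  have hexp : (4*K) * (4*K) = 16*(K*K) := by ring
  have hexp2 : 2*((2*K)*(2*K)) = 8*(K*K) := by ring
  have hexp3 : (4*K)*n = 4*(K*n) := by ring
  rw [hexp, hexp2, hexp3] at hchain
  -- hchain : 16*(K*K) ≤ 4*K + 4*K + (8*(K*K) + 4*(K*K) + 4*(K*n))
  have hKn : 0 ≤ K * n := Nat.zero_le _
  linarith [hx, hdist, hchain, hKn]


lemma R2_sq_expand (a : R2) : Polynomial.expand (ZMod 2) 2 a = a ^ 2 := by
  have hfr : frobenius (ZMod 2) 2 = RingHom.id (ZMod 2) := by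
    ext x
    rw [frobenius_def]
    exact ZMod.pow_card x
  have h1 := Polynomial.map_frobenius_expand 2 a
  rwa [hfr, Polynomial.map_id] at h1

lemma R2_coeff_sq (a : R2) (j : ℕ) :
    (a ^ 2).coeff j = if 2 ∣ j then a.coeff (j / 2) else 0 := by
  rw [← R2_sq_expand, Polynomial.coeff_expand (by norm_num)]

lemma R2_sq_not_dvd (u v : R2) (h : IsCoprime u v) (q : R2) (hq : Irreducible q) :
    ¬ q ^ 2 ∣ (u ^ 2 + X * v ^ 2) := by
  intro hdvd
  obtain ⟨w, hw⟩ := hdvd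
  have hqprime : Prime q := UniqueFactorizationMonoid.irreducible_iff_prime.mp hq
  have hder1 : Polynomial.derivative (u ^ 2 + X * v ^ 2) = v ^ 2 := by
    rw [derivative_add, derivative_mul, derivative_X, derivative_pow, derivative_pow]
    norm_num
    rw [R2_C2_eq_zero]
    ring
  have hder2 : Polynomial.derivative (q ^ 2 * w) = q ^ 2 * Polynomial.derivative w := by
    rw [derivative_mul, derivative_pow]
    norm_num
    exact Or.inl (Or.inl (Or.inl R2_two_eq_zero))
  have hv2 : q ^ 2 ∣ v ^ 2 := by
    rw [← hder1, hw, hder2]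
    exact Dvd.intro _ rfl
  have hqv : q ∣ v := hqprime.dvd_of_dvd_pow (dvd_trans (dvd_pow_self q (by norm_num)) hv2)
  have hXv : q ^ 2 ∣ X * v ^ 2 := Dvd.dvd.mul_left (pow_dvd_pow_of_dvd hqv 2) X
  have hu2 : q ^ 2 ∣ u ^ 2 := by
    have : u ^ 2 = (u ^ 2 + X * v ^ 2) - X * v ^ 2 := by ring
    rw [this]
    exact dvd_sub (hw ▸ Dvd.intro _ rfl) hXv
  have hqu : q ∣ u := hqprime.dvd_of_dvd_pow (dvd_trans (dvd_pow_self q (by norm_num)) hu2)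
  exact hq.not_isUnit (h.isUnit_of_dvd' hqu hqv)

lemma coeff_sumMonomial (c : ℕ → ZMod 2) (N j : ℕ) :
    (∑ i ∈ Finset.range N, Polynomial.monomial i (c i)).coeff j = if j < N then c j else 0 := by
  rw [finset_sum_coeff]
  simp only [coeff_monomial]
  split
  · next hj =>
    rw [Finset.sum_eq_single j]
    · simp
    · intro b _ hb
      exact if_neg hb
    · intro hj2
      exact absurd (Finset.mem_range.mpr hj) hj2
  · next hj =>
    apply Finset.sum_eq_zero
    intro b hb
    rw [Finset.mem_range] at hb
    exact if_neg (by omega)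

lemma exists_EO (h : R2) (n : ℕ) (hn : h.natDegree ≤ n) :
    ∃ E O : R2, E.natDegree ≤ n ∧ O.natDegree ≤ n ∧ h = E ^ 2 + X * O ^ 2 := by
  set E : R2 := ∑ i ∈ Finset.range (n+1), Polynomial.monomial i (h.coeff (2*i)) with hE
  set O : R2 := ∑ i ∈ Finset.range (n+1), Polynomial.monomial i (h.coeff (2*i+1)) with hO
  have hcE : ∀ j, E.coeff j = h.coeff (2*j) := by
    intro j
    rw [hE, coeff_sumMonomial]
    split
    · rfl
    · next hj =>
      rw [coeff_eq_zero_of_natDegree_lt (by omega)]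
  have hcO : ∀ j, O.coeff j = h.coeff (2*j+1) := by
    intro j
    rw [hO, coeff_sumMonomial]
    split
    · rfl
    · next hj =>
      rw [coeff_eq_zero_of_natDegree_lt (by omega)]
  refine ⟨E, O, ?_, ?_, ?_⟩
  · refine natDegree_le_iff_coeff_eq_zero.mpr (fun N hN => ?_)
    rw [hcE N]
    exact coeff_eq_zero_of_natDegree_lt (by omega)
  · refine natDegree_le_iff_coeff_eq_zero.mpr (fun N hN => ?_)
    rw [hcO N]
    exact coeff_eq_zero_of_natDegree_lt (by omega)
  · ext j
    rw [coeff_add, R2_coeff_sq]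
    match j with
    | 0 =>
      simp only [Nat.zero_div, dvd_zero, if_pos]
      rw [hcE 0, mul_zero]
      have : (X * O ^ 2).coeff 0 = 0 := by
        rw [mul_comm, coeff_mul_X_zero]
      rw [this, add_zero]
    | (k+1) =>
      rw [coeff_X_mul, R2_coeff_sq]
      rcases Nat.even_or_odd (k+1) with he | ho
      · obtain ⟨i, hi⟩ := he
        rw [if_pos (by omega), if_neg (by omega), hcE]
        rw [add_zero]
        congr 1
        omega
      · obtain ⟨i, hi⟩ := ho
        rw [if_neg (by omega), if_pos (by omega), hcO]
        rw [zero_add]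
        congr 1
        omega

lemma intSquarefree_of_mod2 (g : Polynomial ℤ)
    (hlc : ¬ (2:ℤ) ∣ g.leadingCoeff)
    (hsf : ∀ q : R2, Irreducible q → ¬ q ^ 2 ∣ g.map (Int.castRingHom (ZMod 2))) :
    IntSquarefree g := by
  intro p hp hdp hdvd
  obtain ⟨u, hu⟩ := hdvd
  have hlcp : ¬ (2:ℤ) ∣ p.leadingCoeff := by
    intro h2
    apply hlc
    rw [hu, leadingCoeff_mul, leadingCoeff_pow]
    exact Dvd.dvd.mul_right (h2.trans (dvd_pow_self _ (by norm_num))) _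
  have hcoeffmap : (p.map (Int.castRingHom (ZMod 2))).coeff p.natDegree ≠ 0 := by
    rw [Polynomial.coeff_map]
    intro h0
    apply hlcp
    have h1 : ((p.leadingCoeff : ℤ) : ZMod 2) = 0 := h0
    exact_mod_cast (ZMod.intCast_zmod_eq_zero_iff_dvd p.leadingCoeff 2).mp h1
  have hdegmap : 0 < (p.map (Int.castRingHom (ZMod 2))).natDegree :=
    lt_of_lt_of_le hdp (le_natDegree_of_ne_zero hcoeffmap)
  have hne : p.map (Int.castRingHom (ZMod 2)) ≠ 0 := fun h0 => hcoeffmap (by rw [h0]; simp)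
  have hnu : ¬ IsUnit (p.map (Int.castRingHom (ZMod 2))) := by
    intro hun
    rw [Polynomial.natDegree_eq_zero_of_isUnit hun] at hdegmap
    exact lt_irrefl 0 hdegmap
  obtain ⟨q, hq, hqdvd⟩ := WfDvdMonoid.exists_irreducible_factor hnu hne
  apply hsf q hq
  rw [hu, Polynomial.map_mul, Polynomial.map_pow]
  exact Dvd.dvd.mul_right (pow_dvd_pow_of_dvd hqdvd 2) _

lemma sqf_aux_pow : ∀ l : ℕ, 6 ≤ l → 2 * l + 14 ≤ 2 ^ l := by
  intro l hl
  induction l, hl using Nat.le_induction with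
  | base => norm_num
  | succ k hk ih =>
    have : (2:ℕ)^(k+1) = 2 * 2^k := by rw [pow_succ]; ring
    omega

theorem stmt_2 (ε : ℝ) (hε : 0 < ε) :
    ∃ N : ℕ, ∀ n : ℕ, N ≤ n →
      ∀ f : Polynomial ℤ, f.natDegree = n →
        ∃ g : Polynomial ℤ, IntSquarefree g ∧ g.natDegree = n ∧
          (intLength (f - g) : ℝ) ≤ Real.log n ^ (2 * Real.log 2 + ε) := by
  classical
  refine ⟨⌈Real.exp 200⌉₊ + 1, fun n hn f hf => ?_⟩
  -- basic numeric facts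
  have hnR : Real.exp 200 ≤ (n : ℝ) := by
    refine le_trans (Nat.le_ceil _) ?_
    exact_mod_cast le_trans (Nat.le_succ _) hn
  have hexp200 : (201 : ℝ) ≤ Real.exp 200 := by
    have := Real.add_one_le_exp (200 : ℝ)
    linarith
  have hn64 : 64 ≤ n := by
    have h1 : (64 : ℝ) ≤ (n : ℝ) := by linarith
    exact_mod_cast h1
  have hn0 : 0 < n := by omega
  have hlog : (200 : ℝ) ≤ Real.log n := by
    rw [Real.le_log_iff_exp_le (by positivity)]
    exact hnR
  set L := Nat.log 2 n with hL
  have hL6 : 6 ≤ L := by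
    rw [hL]
    have : (2:ℕ) ^ 6 ≤ n := by norm_num; omega
    exact (Nat.le_log_iff_pow_le (by norm_num) (by omega)).mpr this
  have hpowL : 2 ^ L ≤ n := Nat.pow_log_le_self 2 (by omega)
  have hpowL2 : n < 2 ^ (L + 1) := Nat.lt_pow_succ_log_self (by norm_num) n
  set m := L + 7 with hm
  have h2mn : 2 * m ≤ n := by
    have h1 := sqf_aux_pow L hL6
    omega
  have hbig : 2 + 2 * n < 2 ^ (m - 2) := by
    have h1 : m - 2 = (L + 1) + 4 := by omega
    rw [h1, pow_add]
    have h2 : (2:ℕ)^4 = 16 := by norm_num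
    rw [h2]
    have h3 : 0 < 2 ^ (L+1) := Nat.pow_pos (by norm_num)
    omega
  -- construct f₁ with odd leading coefficient
  set c : ℤ := if (2:ℤ) ∣ f.coeff n then 1 else 0 with hc
  set f₁ := f + Polynomial.C c * Polynomial.X ^ n with hf₁
  have hcoef₁ : ∀ j, f₁.coeff j = f.coeff j + (if j = n then c else 0) := by
    intro j
    rw [hf₁, coeff_add, coeff_C_mul, coeff_X_pow]
    by_cases hj : j = n <;> simp [hj]
  have hodd : ¬ (2:ℤ) ∣ f₁.coeff n := by
    rw [hcoef₁ n, if_pos rfl, hc]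
    split
    · next h2 => intro hdvd; omega
    · next h2 => simpa using h2
  have hf₁ne : f₁.coeff n ≠ 0 := fun h0 => hodd (h0 ▸ dvd_zero 2)
  have hf₁hi : ∀ j, n < j → f₁.coeff j = 0 := by
    intro j hj
    rw [hcoef₁ j, if_neg (by omega), coeff_eq_zero_of_natDegree_lt (by omega), add_zero]
  have hdegf₁ : f₁.natDegree = n := by
    refine le_antisymm (natDegree_le_iff_coeff_eq_zero.mpr hf₁hi) (le_natDegree_of_ne_zero hf₁ne)
  -- mod 2 reduction and decomposition
  set h2 : R2 := f₁.map (Int.castRingHom (ZMod 2)) with hh2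
  have hdegh : h2.natDegree ≤ n := le_trans natDegree_map_le (le_of_eq hdegf₁)
  obtain ⟨E, O, hE, hO, hEO⟩ := exists_EO h2 n hdegh
  obtain ⟨a, haV, b, hbV, hco⟩ := exists_coprime_pert n m (by omega) (by omega) hbig E O hE hO
  have haC := mem_Vm_iff.mp haV
  have hbC := mem_Vm_iff.mp hbV
  set e : R2 := a ^ 2 + X * b ^ 2 with he
  have hesupp : ∀ j, 2 * m ≤ j → e.coeff j = 0 := by
    intro j hj
    rw [he, coeff_add, R2_coeff_sq]
    have hx : (X * b ^ 2).coeff j = 0 := by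
      match j, hj with
      | (k+1), hj =>
        rw [coeff_X_mul, R2_coeff_sq]
        split
        · exact hbC _ (by omega)
        · rfl
    rw [hx, add_zero]
    split
    · exact haC _ (by omega)
    · rfl
  have hesub : e.support ⊆ Finset.range (2 * m) := by
    intro j hj
    rw [Finset.mem_range]
    by_contra hcon
    exact (Polynomial.mem_support_iff.mp hj) (hesupp j (by omega))
  -- lift e to ℤ
  set w : Polynomial ℤ := ∑ j ∈ e.support, Polynomial.X ^ j with hw
  have hwcoeff : ∀ j, w.coeff j = if j ∈ e.support then 1 else 0 := by
    intro j
    rw [hw, finset_sum_coeff]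
    simp only [coeff_X_pow]
    split
    · next hj =>
      rw [Finset.sum_eq_single j]
      · simp
      · intro b _ hb
        exact if_neg (by omega)
      · intro hj2
        exact absurd hj hj2
    · next hj =>
      apply Finset.sum_eq_zero
      intro i hi
      exact if_neg (by rintro rfl; exact hj hi)
  have hwmap : w.map (Int.castRingHom (ZMod 2)) = e := by
    ext j
    rw [coeff_map]
    have h1 : ((w.coeff j : ℤ) : ZMod 2) = e.coeff j := by
      rw [hwcoeff j]
      split
      · next hj =>
        have := Polynomial.mem_support_iff.mp hj
        rw [zmod2_ne_zero _ this]
        norm_num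
      · next hj =>
        rw [Polynomial.notMem_support_iff.mp hj]
        norm_num
    exact h1
  set g : Polynomial ℤ := f₁ + w with hg
  -- degree of g
  have hwhi : ∀ j, n ≤ j → w.coeff j = 0 := by
    intro j hj
    rw [hwcoeff j, if_neg]
    intro hmem
    have := Finset.mem_range.mp (hesub hmem)
    omega
  have hgcoeffn : g.coeff n = f₁.coeff n := by
    rw [hg, coeff_add, hwhi n (le_refl n), add_zero]
  have hghi : ∀ j, n < j → g.coeff j = 0 := by
    intro j hj
    rw [hg, coeff_add, hwhi j (by omega), hf₁hi j hj, add_zero]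
  have hgdeg : g.natDegree = n :=
    le_antisymm (natDegree_le_iff_coeff_eq_zero.mpr hghi)
      (le_natDegree_of_ne_zero (by rw [hgcoeffn]; exact hf₁ne))
  -- g mod 2
  have hgmap : g.map (Int.castRingHom (ZMod 2)) = (E + a) ^ 2 + X * (O + b) ^ 2 := by
    rw [hg, Polynomial.map_add, hwmap, ← hh2, hEO, he]
    rw [CharTwo.add_sq, CharTwo.add_sq]
    ring
  -- squarefree
  have hsf : IntSquarefree g := by
    apply intSquarefree_of_mod2
    · have : g.leadingCoeff = f₁.coeff n := by
        rw [Polynomial.leadingCoeff, hgdeg, hgcoeffn]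
      rw [this]
      exact hodd
    · intro q hq
      rw [hgmap]
      exact R2_sq_not_dvd _ _ hco q hq
  -- length bound
  have hfg : ∀ j, (f - g).coeff j = -((if j = n then c else 0) + w.coeff j) := by
    intro j
    rw [Polynomial.coeff_sub, hg, coeff_add, hcoef₁ j]
    ring
  have habs : ∀ j, |(f - g).coeff j| ≤ 1 := by
    intro j
    rw [hfg j, abs_neg]
    by_cases hj : j = n
    · rw [if_pos hj, hj, hwhi n (le_refl n), add_zero, hc]
      split <;> norm_num
    · rw [if_neg hj, zero_add, hwcoeff j]
      split <;> norm_num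
  have hsuppfg : (f - g).support ⊆ insert n e.support := by
    intro j hj
    have hne := Polynomial.mem_support_iff.mp hj
    rw [Finset.mem_insert]
    by_contra hcon
    push_neg at hcon
    apply hne
    rw [hfg j, if_neg hcon.1, hwcoeff j, if_neg hcon.2]
    norm_num
  have hcard : ((f - g).support.card : ℤ) ≤ 2 * m + 1 := by
    have h1 : (f - g).support.card ≤ (insert n e.support).card := Finset.card_le_card hsuppfg
    have h2 : (insert n e.support).card ≤ e.support.card + 1 := Finset.card_insert_le _ _
    have h3 : e.support.card ≤ 2 * m := by
      have := Finset.card_le_card hesub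
      rwa [Finset.card_range] at this
    have : (f - g).support.card ≤ 2 * m + 1 := by omega
    exact_mod_cast this
  have hlen : intLength (f - g) ≤ 2 * m + 1 := by
    have h1 : intLength (f - g) ≤ ((f - g).support.card : ℕ) • (1:ℤ) := by
      apply Finset.sum_le_card_nsmul
      intro j _
      exact habs j
    rw [nsmul_eq_mul, mul_one] at h1
    exact le_trans h1 hcard
  refine ⟨g, hsf, hgdeg, ?_⟩
  have hlenR : (intLength (f - g) : ℝ) ≤ 2 * (m:ℝ) + 1 := by
    have h2 : (intLength (f - g) : ℝ) ≤ ((2 * (m:ℤ) + 1 : ℤ) : ℝ) := by exact_mod_cast hlen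
    push_cast at h2 ⊢
    linarith
  set t := Real.log n with ht
  have ht1 : (1:ℝ) ≤ t := by linarith
  have hlog2 : (0.6931471803 : ℝ) < Real.log 2 := Real.log_two_gt_d9
  have hLlog : (L : ℝ) * Real.log 2 ≤ t := by
    have h1 : ((2:ℝ)) ^ (L:ℕ) ≤ (n:ℝ) := by exact_mod_cast hpowL
    have h2 : Real.log ((2:ℝ)^(L:ℕ)) ≤ t := Real.log_le_log (by positivity) h1
    rwa [Real.log_pow] at h2
  have hmcast : (m:ℝ) = (L:ℝ) + 7 := by rw [hm]; push_cast; ring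
  have hLnn : (0:ℝ) ≤ (L:ℝ) := Nat.cast_nonneg _
  have hmR : 2*(m:ℝ) + 1 ≤ 4 * t := by nlinarith [hLlog, hlog2, hlog, hmcast, hLnn]
  have h43 : 4 * t ≤ t ^ ((4:ℝ)/3) := by
    have hthird : (4:ℝ) ≤ t ^ ((1:ℝ)/3) := by
      have h64 : ((64:ℝ)) ^ ((1:ℝ)/3) = 4 := by
        rw [show (64:ℝ) = (4:ℝ)^(3:ℕ) by norm_num, ← Real.rpow_natCast (4:ℝ) 3,
          ← Real.rpow_mul (by norm_num)]
        norm_num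
      rw [← h64]
      exact Real.rpow_le_rpow (by norm_num) (by linarith) (by norm_num)
    have heq : t ^ ((4:ℝ)/3) = t * t ^ ((1:ℝ)/3) := by
      rw [show (4:ℝ)/3 = 1 + 1/3 by norm_num, Real.rpow_add (by linarith), Real.rpow_one]
    rw [heq]
    nlinarith [hthird, ht1]
  have hfin : t ^ ((4:ℝ)/3) ≤ t ^ (2 * Real.log 2 + ε) := by
    apply Real.rpow_le_rpow_of_exponent_le ht1
    nlinarith [hlog2, hε]
  calc (intLength (f - g) : ℝ) ≤ 2*(m:ℝ)+1 := hlenR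
    _ ≤ 4*t := hmR
    _ ≤ t ^ ((4:ℝ)/3) := h43
    _ ≤ _ := hfin

end SqfAux
end

section
/- Let f(x) ∈ 𝔽₂[x] with deg f ≥ 2. Then f(x) is squarefree in 𝔽₂[x] if and only if gcd(f_e(x), f_o(x)) = 1. Moreover, any irreducible polynomial dividing f(x) to multiplicity greater than 1 divides gcd(f_e(x), f_o(x)). -/
/-- The even part of `f = ∑ aᵢ xⁱ ∈ 𝔽₂[x]`: the polynomial `∑_{i=0}^{⌊n/2⌋} a_{2i} xⁱ`. -/
noncomputable def fe (f : Polynomial (ZMod 2)) : Polynomial (ZMod 2) :=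
  ∑ i ∈ Finset.range (f.natDegree / 2 + 1),
    Polynomial.C (f.coeff (2 * i)) * Polynomial.X ^ i

/-- The odd part of `f = ∑ aᵢ xⁱ ∈ 𝔽₂[x]`: the polynomial `∑_{i=0}^{⌊(n-1)/2⌋} a_{2i+1} xⁱ`. -/
noncomputable def fo (f : Polynomial (ZMod 2)) : Polynomial (ZMod 2) :=
  ∑ i ∈ Finset.range ((f.natDegree - 1) / 2 + 1),
    Polynomial.C (f.coeff (2 * i + 1)) * Polynomial.X ^ i

lemma zmod2_sq (a : ZMod 2) : a ^ 2 = a := by revert a; decide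

lemma sum_sq' (s : Finset ℕ) (a : ℕ → ZMod 2) :
    (∑ i ∈ s, Polynomial.C (a i) * Polynomial.X ^ i) ^ 2
      = ∑ i ∈ s, Polynomial.C (a i) * Polynomial.X ^ (2 * i) := by
  rw [CharTwo.sum_sq]
  refine Finset.sum_congr rfl fun i _ => ?_
  rw [mul_pow, ← Polynomial.C_pow, zmod2_sq, ← pow_mul, mul_comm i 2]

lemma coeff_sum_pow (m n : ℕ) (a : ℕ → ZMod 2) (e : ℕ → ℕ) :
    (∑ i ∈ Finset.range m, Polynomial.C (a i) * Polynomial.X ^ (e i)).coeff n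
      = ∑ i ∈ Finset.range m, if n = e i then a i else 0 := by
  simp [Polynomial.finset_sum_coeff, Polynomial.coeff_C_mul, Polynomial.coeff_X_pow,
    mul_ite, mul_one, mul_zero]

lemma key (f : Polynomial (ZMod 2)) :
    (fe f) ^ 2 + Polynomial.X * (fo f) ^ 2 = f := by
  unfold fe fo
  rw [sum_sq', sum_sq', Finset.mul_sum]
  have hX : ∀ i : ℕ, Polynomial.X * (Polynomial.C (f.coeff (2 * i + 1)) *
      Polynomial.X ^ (2 * i)) = Polynomial.C (f.coeff (2 * i + 1)) * Polynomial.X ^ (2 * i + 1) := by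
    intro i; ring
  simp_rw [hX]
  ext n
  rw [Polynomial.coeff_add, coeff_sum_pow _ _ _ (fun i => 2 * i),
    coeff_sum_pow _ _ _ (fun i => 2 * i + 1)]
  rcases Nat.even_or_odd n with ⟨k, hk⟩ | ⟨k, hk⟩
  · have h2 : (∑ i ∈ Finset.range ((f.natDegree - 1) / 2 + 1),
        if n = 2 * i + 1 then f.coeff (2 * i + 1) else 0) = 0 :=
      Finset.sum_eq_zero fun b _ => if_neg (by omega)
    rw [h2, add_zero]
    by_cases h : k < f.natDegree / 2 + 1
    · have h1 : (∑ i ∈ Finset.range (f.natDegree / 2 + 1),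
          if n = 2 * i then f.coeff (2 * i) else 0) = f.coeff (2 * k) := by
        rw [Finset.sum_eq_single k (fun b _ hb => if_neg (by omega))
          (fun h' => absurd (Finset.mem_range.2 h) h'), if_pos (by omega)]
      rw [h1, show 2 * k = n by omega]
    · have h1 : (∑ i ∈ Finset.range (f.natDegree / 2 + 1),
          if n = 2 * i then f.coeff (2 * i) else 0) = 0 :=
        Finset.sum_eq_zero fun b hb => if_neg (by simp only [Finset.mem_range] at hb; omega)
      rw [h1, Polynomial.coeff_eq_zero_of_natDegree_lt (by omega)]
  · have h1 : (∑ i ∈ Finset.range (f.natDegree / 2 + 1),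
        if n = 2 * i then f.coeff (2 * i) else 0) = 0 :=
      Finset.sum_eq_zero fun b _ => if_neg (by omega)
    rw [h1, zero_add]
    by_cases h : k < (f.natDegree - 1) / 2 + 1
    · have h2 : (∑ i ∈ Finset.range ((f.natDegree - 1) / 2 + 1),
          if n = 2 * i + 1 then f.coeff (2 * i + 1) else 0) = f.coeff (2 * k + 1) := by
        rw [Finset.sum_eq_single k (fun b _ hb => if_neg (by omega))
          (fun h' => absurd (Finset.mem_range.2 h) h'), if_pos (by omega)]
      rw [h2, show 2 * k + 1 = n by omega]
    · have h2 : (∑ i ∈ Finset.range ((f.natDegree - 1) / 2 + 1),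
          if n = 2 * i + 1 then f.coeff (2 * i + 1) else 0) = 0 :=
        Finset.sum_eq_zero fun b hb => if_neg (by simp only [Finset.mem_range] at hb; omega)
      rw [h2, Polynomial.coeff_eq_zero_of_natDegree_lt (by omega)]

lemma derivative_eq_fo_sq (f : Polynomial (ZMod 2)) :
    Polynomial.derivative f = (fo f) ^ 2 := by
  conv_lhs => rw [← key f]
  rw [map_add, Polynomial.derivative_pow, Polynomial.derivative_mul,
    Polynomial.derivative_pow, Polynomial.derivative_X]
  simp [show ((2 : ℕ) : ZMod 2) = 0 by decide, show (2 : ZMod 2) = 0 by decide]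

theorem stmt_6 (f : Polynomial (ZMod 2)) (hf : 2 ≤ f.natDegree) :
    (Squarefree f ↔ EuclideanDomain.gcd (fe f) (fo f) = 1) ∧
    (∀ p : Polynomial (ZMod 2), Irreducible p → p ^ 2 ∣ f →
      p ∣ EuclideanDomain.gcd (fe f) (fo f)) := by
  have hf0 : f ≠ 0 := fun h => by simp [h] at hf
  have part2 : ∀ p : Polynomial (ZMod 2), Irreducible p → p ^ 2 ∣ f →
      p ∣ EuclideanDomain.gcd (fe f) (fo f) := by
    intro p hp hpf
    obtain ⟨q, hq⟩ := hpf
    have hd : p ∣ Polynomial.derivative f := by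
      rw [hq, Polynomial.derivative_mul, Polynomial.derivative_pow]
      have hp1 : p ∣ p ^ (2 - 1) := dvd_pow_self p (by norm_num)
      exact dvd_add (((hp1.mul_left _).mul_right _).mul_right _)
        ((dvd_pow_self p two_ne_zero).mul_right _)
    rw [derivative_eq_fo_sq] at hd
    have hfo : p ∣ fo f := hp.prime.dvd_of_dvd_pow hd
    have hfe : p ∣ fe f := by
      have h1 : p ∣ f := (dvd_pow_self p two_ne_zero).trans ⟨q, hq⟩
      have h3 : (fe f) ^ 2 = f - Polynomial.X * (fo f) ^ 2 :=
        eq_sub_iff_add_eq.2 (key f)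
      have h2 : p ∣ (fe f) ^ 2 := by
        rw [h3]
        exact dvd_sub h1 ((dvd_pow hfo two_ne_zero).mul_left _)
      exact hp.prime.dvd_of_dvd_pow h2
    exact EuclideanDomain.dvd_gcd hfe hfo
  refine ⟨⟨fun hsq => ?_, fun hgcd => ?_⟩, part2⟩
  · set g := EuclideanDomain.gcd (fe f) (fo f) with hg
    have h1 : g * g ∣ (fe f) ^ 2 := by
      rw [sq]
      exact mul_dvd_mul (EuclideanDomain.gcd_dvd_left _ _) (EuclideanDomain.gcd_dvd_left _ _)
    have h2 : g * g ∣ Polynomial.X * (fo f) ^ 2 := by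
      refine Dvd.dvd.mul_left ?_ _
      rw [sq]
      exact mul_dvd_mul (EuclideanDomain.gcd_dvd_right _ _) (EuclideanDomain.gcd_dvd_right _ _)
    have hgsq : g * g ∣ f := by rw [← key f]; exact dvd_add h1 h2
    have hunit : IsUnit g := hsq g hgsq
    obtain ⟨r, hr, hrg⟩ := Polynomial.isUnit_iff.1 hunit
    have hr0 : r ≠ 0 := hr.ne_zero
    have hr1 : r = 1 := (by decide : ∀ r : ZMod 2, r ≠ 0 → r = 1) r hr0
    rw [← hrg, hr1, map_one]
  · intro x hx
    by_contra hxu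
    have hx0 : x ≠ 0 := by
      rintro rfl
      exact hf0 (zero_dvd_iff.1 (by simpa using hx))
    obtain ⟨p, hp, hpx⟩ := WfDvdMonoid.exists_irreducible_factor hxu hx0
    have hpg : p ∣ EuclideanDomain.gcd (fe f) (fo f) :=
      part2 p hp (by rw [sq]; exact (mul_dvd_mul hpx hpx).trans hx)
    rw [hgcd] at hpg
    exact hp.not_isUnit (isUnit_of_dvd_one hpg)
end

section
/- Let f(x), d(x) ∈ 𝔽₂[x] with f(x) nonzero and deg d > 0. There exists a polynomial g(x) ∈ 𝔽₂[x] of degree at most deg f such that gcd(d(x), g(x)) = 1 and L₂(f − g) ≤ deg d. Furthermore, if in addition deg d ≤ deg f, then one can take g with deg g = deg f. -/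
open Polynomial in
theorem stmt_12 (f d : Polynomial (ZMod 2)) (hf : f ≠ 0) (hd : 0 < d.degree) :
    (∃ g : Polynomial (ZMod 2), g.degree ≤ f.degree ∧ IsCoprime d g ∧
      length2 (f - g) ≤ d.natDegree) ∧
    (d.degree ≤ f.degree → ∃ g : Polynomial (ZMod 2), g.degree = f.degree ∧ IsCoprime d g ∧
      length2 (f - g) ≤ d.natDegree) := by
  have hd0 : d ≠ 0 := fun h => by simp [h] at hd
  set g : Polynomial (ZMod 2) := d * (f / d) + 1 with hg
  have hdm : d * (f / d) + f % d = f := EuclideanDomain.div_add_mod f d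
  have hcop : IsCoprime d g := ⟨-(f / d), 1, by rw [hg]; ring⟩
  have hsub : f - g = f % d - 1 := by
    rw [hg]; linear_combination -hdm
  have hdeg1 : (1 : Polynomial (ZMod 2)).degree < d.degree := by
    simpa using hd
  have hmodlt : (f % d).degree < d.degree := EuclideanDomain.mod_lt _ hd0
  have hsublt : (f - g).degree < d.degree := by
    rw [hsub]
    exact lt_of_le_of_lt (degree_sub_le _ _) (max_lt hmodlt hdeg1)
  have hlen : length2 (f - g) ≤ d.natDegree := by
    by_cases h0 : f - g = 0
    · simp [length2, h0]
    · have h1 : (f - g).natDegree < d.natDegree :=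
        natDegree_lt_natDegree h0 hsublt
      calc length2 (f - g) ≤ (f - g).natDegree + 1 := card_supp_le_succ_natDegree _
        _ ≤ d.natDegree := h1
  have part2 : d.degree ≤ f.degree → g.degree = f.degree := by
    intro hdf
    have hmul : (d * (f / d)).degree = f.degree := by
      rw [degree_mul]; exact degree_add_div hd0 hdf
    have : (1 : Polynomial (ZMod 2)).degree < (d * (f / d)).degree := by
      rw [hmul]; simpa using lt_of_lt_of_le hd hdf
    rw [hg, degree_add_eq_left_of_degree_lt this, hmul]
  constructor
  · refine ⟨g, ?_, hcop, hlen⟩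
    by_cases hdf : d.degree ≤ f.degree
    · exact le_of_eq (part2 hdf)
    · push_neg at hdf
      have hq0 : f / d = 0 := (Polynomial.div_eq_zero_iff hd0).2 hdf
      have : g = 1 := by rw [hg, hq0, mul_zero, zero_add]
      rw [this, degree_one]
      exact zero_le_degree_iff.2 hf
  · exact fun hdf => ⟨g, part2 hdf, hcop, hlen⟩
end

section
/- Let t be a positive integer, and set Π₁ = ∏_{i=1}^{t} (x^i + 1) ∈ 𝔽₂[x]. Let Π̃₁ be the product of the distinct monic irreducible polynomials dividing Π₁ (i.e., the radical of Π₁). Then deg Π̃₁ ≤ ⌈t/2⌉² − ⌈t/2⌉ + 1. -/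
open Polynomial Finset UniqueFactorizationMonoid

private instance : Subsingleton (Polynomial (ZMod 2))ˣ := by
  constructor
  intro u v
  ext
  obtain ⟨r, hr, hru⟩ := Polynomial.isUnit_iff.mp u.isUnit
  obtain ⟨s, hs, hsv⟩ := Polynomial.isUnit_iff.mp v.isUnit
  have key : ∀ x : ZMod 2, IsUnit x → x = 1 := by decide
  have : (u : Polynomial (ZMod 2)) = 1 := by rw [← hru, key r hr, map_one]
  have hv : (v : Polynomial (ZMod 2)) = 1 := by rw [← hsv, key s hs, map_one]
  rw [this, hv]

private lemma mem_nf_of_mem_pf {M : Type*} [CommMonoidWithZero M]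
    [NormalizationMonoid M] [UniqueFactorizationMonoid M] {a p : M}
    (hp : p ∈ UniqueFactorizationMonoid.primeFactors a) :
    p ∈ UniqueFactorizationMonoid.normalizedFactors a := by
  classical
  rw [UniqueFactorizationMonoid.primeFactors] at hp
  rwa [Multiset.mem_toFinset] at hp

private lemma radical_dvd_of_forall {a b : Polynomial (ZMod 2)}
    (h : ∀ p : Polynomial (ZMod 2), Prime p → p ∣ a → p ∣ b) :
    UniqueFactorizationMonoid.radical a ∣ b := by
  rw [UniqueFactorizationMonoid.radical]
  exact Finset.prod_primes_dvd b
    (fun p hp => prime_of_normalized_factor p (mem_nf_of_mem_pf hp))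
    (fun p hp => h p (prime_of_normalized_factor p (mem_nf_of_mem_pf hp))
      (dvd_of_mem_normalizedFactors (mem_nf_of_mem_pf hp)))

private lemma arith (n : ℕ) :
    (∑ m ∈ Finset.Icc 1 n, if Odd m then m - 1 else 0) = (n + 1) / 2 * ((n + 1) / 2 - 1) := by
  induction n with
  | zero => simp
  | succ k ih =>
    rw [Finset.sum_Icc_succ_top (by omega : 1 ≤ k + 1), ih]
    rcases Nat.even_or_odd (k + 1) with h | h
    · rw [if_neg (by simpa [Nat.not_odd_iff_even] using h)]
      obtain ⟨a, ha⟩ := h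
      rw [show (k + 1 + 1) / 2 = (k + 1) / 2 by omega, add_zero]
    · rw [if_pos h]
      obtain ⟨a, ha⟩ := h
      rw [show (k + 1) / 2 = a by omega, show (k + 1 + 1) / 2 = a + 1 by omega,
        show k + 1 - 1 = 2 * a by omega]
      rcases a with _ | b
      · simp
      · simp only [Nat.succ_sub_one]
        ring

theorem stmt_13 (t : ℕ) (ht : 0 < t) :
    (UniqueFactorizationMonoid.radical
        (∏ i ∈ Finset.Icc 1 t, (Polynomial.X ^ i + 1) : Polynomial (ZMod 2))).natDegree
      ≤ ((t + 1) / 2) ^ 2 - (t + 1) / 2 + 1 := by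
  set P : Polynomial (ZMod 2) := ∏ i ∈ Finset.Icc 1 t, (X ^ i + 1) with hP
  set s : Finset ℕ := (Finset.Icc 1 t).filter (fun m => Odd m) with hs
  set g : ℕ → Polynomial (ZMod 2) := fun m => ∑ j ∈ Finset.range m, X ^ j with hg
  set Q : Polynomial (ZMod 2) := (X + 1) * ∏ m ∈ s, g m with hQ
  have hsub : (X - 1 : Polynomial (ZMod 2)) = X + 1 := CharTwo.sub_eq_add X 1
  have hgeom : ∀ m : ℕ, g m * (X + 1) = (X ^ m + 1 : Polynomial (ZMod 2)) := by
    intro m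
    have := geom_sum_mul (X : Polynomial (ZMod 2)) m
    rwa [hsub, CharTwo.sub_eq_add] at this
  have hXm_ne : ∀ m : ℕ, m ≠ 0 → (X ^ m + 1 : Polynomial (ZMod 2)) ≠ 0 := by
    intro m hm h
    have := congrArg (fun q : Polynomial (ZMod 2) => q.coeff 0) h
    simp [coeff_X_pow, hm, Ne.symm hm] at this
  have hX1 : (X + 1 : Polynomial (ZMod 2)) ≠ 0 := by
    simpa using hXm_ne 1 one_ne_zero
  have hQ0 : Q ≠ 0 := by
    rw [hQ]
    refine mul_ne_zero hX1 (Finset.prod_ne_zero_iff.mpr ?_)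
    · intro m hm
      have hm1 : m ≠ 0 := by
        simp only [hs, Finset.mem_filter, Finset.mem_Icc] at hm
        omega
      intro h
      exact hXm_ne m hm1 (by rw [← hgeom m, h, zero_mul])
  have hdvd : UniqueFactorizationMonoid.radical P ∣ Q := by
    refine radical_dvd_of_forall (fun p hprime hpP => ?_)
    rw [hP] at hpP
    obtain ⟨i, hi, hpi⟩ := hprime.exists_mem_finset_dvd hpP
    rw [Finset.mem_Icc] at hi
    obtain ⟨k, m, hm, rfl⟩ := Nat.exists_eq_two_pow_mul_odd (n := i) (by omega)
    have hfrob : (X ^ (2 ^ k * m) + 1 : Polynomial (ZMod 2)) = (X ^ m + 1) ^ (2 ^ k) := by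
      rw [add_pow_char_pow, one_pow, ← pow_mul, mul_comm m (2 ^ k)]
    rw [hfrob] at hpi
    have hpm : p ∣ (X ^ m + 1 : Polynomial (ZMod 2)) := hprime.dvd_of_dvd_pow hpi
    rw [← hgeom m] at hpm
    have hms : m ∈ s := by
      simp only [hs, Finset.mem_filter, Finset.mem_Icc]
      have h1 : 1 ≤ m := hm.pos
      have h2 : m ≤ 2 ^ k * m := Nat.le_mul_of_pos_left m (Nat.pow_pos (n := k) (by norm_num))
      exact ⟨⟨h1, le_trans h2 hi.2⟩, hm⟩
    rw [hQ]
    rcases hprime.dvd_or_dvd hpm with h | h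
    · exact dvd_mul_of_dvd_right (h.trans (Finset.dvd_prod_of_mem g hms)) _
    · exact dvd_mul_of_dvd_left h _
  have hdeg : (UniqueFactorizationMonoid.radical P).natDegree ≤ Q.natDegree :=
    Polynomial.natDegree_le_of_dvd hdvd hQ0
  have hdegQ : Q.natDegree ≤ 1 + ∑ m ∈ s, (m - 1) := by
    rw [hQ]
    refine (natDegree_mul_le).trans (add_le_add ?_ ?_)
    · rw [← C_1, natDegree_X_add_C]
    · refine (natDegree_prod_le _ _).trans (Finset.sum_le_sum fun m _ => ?_)
      refine natDegree_sum_le_of_forall_le _ _ fun j hj => ?_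
      rw [natDegree_X_pow]
      exact Nat.le_sub_one_of_lt (Finset.mem_range.mp hj)
  have harith : ∑ m ∈ s, (m - 1) = (t + 1) / 2 * ((t + 1) / 2 - 1) := by
    rw [hs, Finset.sum_filter]
    exact arith t
  have hge1 : 1 ≤ (t + 1) / 2 := by omega
  have hmulsub : (t + 1) / 2 * ((t + 1) / 2 - 1) = (t + 1) / 2 * ((t + 1) / 2) - (t + 1) / 2 := by
    obtain ⟨c, hc⟩ := Nat.exists_eq_add_of_le hge1
    rw [hc, show 1 + c - 1 = c from by omega]
    have : (1 + c) * (1 + c) = (1 + c) * c + (1 + c) := by ring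
    omega
  calc (UniqueFactorizationMonoid.radical P).natDegree ≤ Q.natDegree := hdeg
    _ ≤ 1 + ∑ m ∈ s, (m - 1) := hdegQ
    _ = 1 + (t + 1) / 2 * ((t + 1) / 2 - 1) := by rw [harith]
    _ ≤ ((t + 1) / 2) ^ 2 - (t + 1) / 2 + 1 := by
        rw [pow_two, hmulsub]
        omega
end

section
/- Let t be an integer with t ≥ 2, and set Π₂ = x · ∏_{i=1}^{t} (x^i + x^{i−1} + ⋯ + x + 1) ∈ 𝔽₂[x]. Let Π̃₂ be the product of the distinct monic irreducible polynomials dividing Π₂ (i.e., the radical of Π₂). Then deg Π̃₂ ≤ ⌈(t+1)/2⌉². -/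
open Polynomial UniqueFactorizationMonoid Finset

lemma my_rad_mono {R : Type*} [CommRing R] [IsDomain R] [NormalizationMonoid R]
    [UniqueFactorizationMonoid R]
    {a b : R} (hb : b ≠ 0) (h : a ∣ b) : radical a ∣ radical b := by
  classical
  have ha : a ≠ 0 := ne_zero_of_dvd_ne_zero hb h
  unfold UniqueFactorizationMonoid.radical
  apply Finset.prod_dvd_prod_of_subset
  unfold UniqueFactorizationMonoid.primeFactors
  exact Multiset.toFinset_subset.mpr (Multiset.subset_of_le
    ((UniqueFactorizationMonoid.dvd_iff_normalizedFactors_le_normalizedFactors ha hb).mp h))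

lemma my_sub_one (p : Polynomial (ZMod 2)) : p - 1 = p + 1 := CharTwo.sub_eq_add p 1

lemma my_frob (m a : ℕ) : ((X:Polynomial (ZMod 2))^m - 1)^(2^a) = X^(m*2^a) - 1 := by
  rw [my_sub_one, my_sub_one, add_pow_char_pow, ← pow_mul, one_pow]

noncomputable def myS (m : ℕ) : Polynomial (ZMod 2) := ∑ j ∈ Finset.range m, X ^ j

lemma myS_mul : ∀ m, myS m * (X + 1) = (X:Polynomial (ZMod 2))^m - 1 := by
  intro m
  rw [← my_sub_one X, myS, geom_sum_mul]

lemma myS_monic (m : ℕ) (hm : m ≠ 0) : (myS m).Monic := monic_geom_sum_X hm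

lemma myS_deg (m : ℕ) : (myS m).natDegree ≤ m - 1 := by
  apply Polynomial.natDegree_sum_le_of_forall_le
  intro j hj
  simp only [Finset.mem_range] at hj
  rw [natDegree_X_pow]
  omega

noncomputable def myP (t : ℕ) : Polynomial (ZMod 2) :=
  X * ((X + 1) * ∏ j ∈ Finset.Icc 1 (t/2), myS (2*j+1))

lemma myP_monic (t : ℕ) : (myP t).Monic := by
  refine monic_X.mul (((monic_X_add_C 1).mul ?_))
  exact Polynomial.monic_prod_of_monic _ _ (fun j _ => myS_monic _ (by omega))

lemma pow_sub_one_dvd_myP (t m : ℕ) (hm : Odd m) (h1 : 1 ≤ m) (h2 : m ≤ t + 1) :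
    ((X:Polynomial (ZMod 2))^m - 1) ∣ myP t := by
  obtain ⟨j, rfl⟩ := hm
  rcases Nat.eq_zero_or_pos j with rfl | hj
  · rw [show 2*0+1 = 1 by rfl, pow_one, my_sub_one]
    exact Dvd.dvd.mul_left (dvd_mul_right (X+1) _) X
  · rw [← myS_mul]
    have hmem : j ∈ Finset.Icc 1 (t/2) := by
      simp only [Finset.mem_Icc]
      omega
    have h1 : myS (2*j+1) ∣ ∏ k ∈ Finset.Icc 1 (t/2), myS (2*k+1) :=
      Finset.dvd_prod_of_mem _ hmem
    have h2 : myS (2*j+1) * (X+1) ∣ (X+1) * ∏ k ∈ Finset.Icc 1 (t/2), myS (2*k+1) := by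
      rw [mul_comm]
      exact mul_dvd_mul_left _ h1
    exact h2.mul_left X

lemma myS_dvd_myP_pow (t : ℕ) {i : ℕ} (hi : 1 ≤ i) (hit : i ≤ t) :
    myS (i+1) ∣ (myP t)^(t+1) := by
  set n := i + 1 with hn
  have hn0 : n ≠ 0 := by omega
  set a := n.factorization 2 with ha
  set m := n / 2^a with hm
  have hfact : 2^a * m = n := Nat.ordProj_mul_ordCompl_eq_self n 2
  have hodd : Odd m := by
    rw [Nat.odd_iff, Nat.two_dvd_ne_zero.symm]
    simpa using Nat.not_dvd_ordCompl Nat.prime_two hn0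
  have hm1 : 1 ≤ m := Nat.ordCompl_pos 2 hn0
  have hmle : m ≤ n := Nat.div_le_self _ _
  have hale : 2^a ≤ n := Nat.ordProj_le 2 hn0
  have hd1 : myS n ∣ (X:Polynomial (ZMod 2))^n - 1 := ⟨_, (myS_mul n).symm⟩
  have hd2 : ((X:Polynomial (ZMod 2))^n - 1) = ((X:Polynomial (ZMod 2))^m - 1)^(2^a) := by
    rw [my_frob, mul_comm m, hfact]
  have hd3 : ((X:Polynomial (ZMod 2))^m - 1) ∣ myP t :=
    pow_sub_one_dvd_myP t m hodd hm1 (by omega)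
  calc myS n ∣ ((X:Polynomial (ZMod 2))^m - 1)^(2^a) := hd2 ▸ hd1
    _ ∣ (myP t)^(2^a) := pow_dvd_pow_of_dvd hd3 _
    _ ∣ (myP t)^(t+1) := pow_dvd_pow _ (by omega)

lemma sum_two_mul (q : ℕ) : ∑ j ∈ Finset.Icc 1 q, 2*j = q*q + q := by
  induction q with
  | zero => simp
  | succ q ih => rw [Finset.sum_Icc_succ_top (by omega), ih]; ring

lemma myP_deg (t : ℕ) : (myP t).natDegree ≤ t/2 * (t/2) + t/2 + 2 := by
  unfold myP
  refine le_trans (natDegree_mul_le) ?_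
  have h1 : (X : Polynomial (ZMod 2)).natDegree = 1 := natDegree_X
  have h2 : (X + 1 : Polynomial (ZMod 2)).natDegree ≤ 1 := by
    refine le_trans (natDegree_add_le _ _) ?_
    simp
  have h3 : (∏ j ∈ Finset.Icc 1 (t/2), myS (2*j+1)).natDegree ≤ t/2 * (t/2) + t/2 := by
    refine le_trans (natDegree_prod_le _ _) ?_
    calc ∑ j ∈ Finset.Icc 1 (t/2), (myS (2*j+1)).natDegree
        ≤ ∑ j ∈ Finset.Icc 1 (t/2), 2*j :=
          Finset.sum_le_sum (fun j _ => le_trans (myS_deg _) (by omega))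
      _ = t/2 * (t/2) + t/2 := sum_two_mul _
  have := le_trans (natDegree_mul_le
    (p := (X + 1 : Polynomial (ZMod 2))) (q := ∏ j ∈ Finset.Icc 1 (t/2), myS (2*j+1)))
    (add_le_add h2 h3)
  omega

theorem stmt_14 (t : ℕ) (ht : 2 ≤ t) :
    (UniqueFactorizationMonoid.radical
        (Polynomial.X *
          ∏ i ∈ Finset.Icc 1 t, (∑ j ∈ Finset.range (i + 1), Polynomial.X ^ j) :
            Polynomial (ZMod 2))).natDegree
      ≤ ((t + 2) / 2) ^ 2 := by
  set P := myP t with hP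
  have hPmonic := myP_monic t
  set Pi := (Polynomial.X *
      ∏ i ∈ Finset.Icc 1 t, (∑ j ∈ Finset.range (i + 1), Polynomial.X ^ j) :
        Polynomial (ZMod 2)) with hPi
  have hdvd : Pi ∣ P ^ ((t+1)*t + 1) := by
    rw [hPi]
    have hprod : (∏ i ∈ Finset.Icc 1 t, (∑ j ∈ Finset.range (i + 1),
        (Polynomial.X : Polynomial (ZMod 2)) ^ j)) ∣ P ^ ((t+1)*t) := by
      have : (∏ i ∈ Finset.Icc 1 t, (∑ j ∈ Finset.range (i + 1),
          (Polynomial.X : Polynomial (ZMod 2)) ^ j)) ∣ ∏ i ∈ Finset.Icc 1 t, P^(t+1) := by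
        refine Finset.prod_dvd_prod_of_dvd _ _ (fun i hi => ?_)
        simp only [Finset.mem_Icc] at hi
        exact myS_dvd_myP_pow t hi.1 hi.2
      rwa [Finset.prod_const, Nat.card_Icc, ← pow_mul, Nat.add_sub_cancel] at this
    have hX : (Polynomial.X : Polynomial (ZMod 2)) ∣ P := dvd_mul_right _ _
    calc (Polynomial.X : Polynomial (ZMod 2)) *
          ∏ i ∈ Finset.Icc 1 t, (∑ j ∈ Finset.range (i + 1), Polynomial.X ^ j)
        ∣ P * P ^ ((t+1)*t) := mul_dvd_mul hX hprod
      _ = P ^ ((t+1)*t + 1) := (pow_succ' P _).symm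
  have hrad : UniqueFactorizationMonoid.radical Pi ∣ P := by
    calc UniqueFactorizationMonoid.radical Pi
        ∣ UniqueFactorizationMonoid.radical (P ^ ((t+1)*t + 1)) :=
          my_rad_mono (pow_ne_zero _ hPmonic.ne_zero) hdvd
      _ = UniqueFactorizationMonoid.radical P :=
          UniqueFactorizationMonoid.radical_pow P (by omega)
      _ ∣ P := UniqueFactorizationMonoid.radical_dvd_self (a := P)
  have hdeg : (UniqueFactorizationMonoid.radical Pi).natDegree ≤ P.natDegree :=
    Polynomial.natDegree_le_of_dvd hrad hPmonic.ne_zero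
  have hPdeg : P.natDegree ≤ t/2 * (t/2) + t/2 + 2 := myP_deg t
  have hq : (t+2)/2 = t/2 + 1 := by omega
  have hq1 : 1 ≤ t/2 := by omega
  have hsq : ((t+2)/2)^2 = t/2 * (t/2) + 2*(t/2) + 1 := by rw [hq]; ring
  omega
end

section
/- Fix ε ∈ (0,1) and let n be a sufficiently large positive integer (depending on ε). Set t = ⌈2 ln(log₂ n)/(1 − ε)⌉, and let Π₂ = x · ∏_{i=1}^{t} (x^i + x^{i−1} + ⋯ + x + 1) ∈ 𝔽₂[x]. Let f(x) ∈ 𝔽₂[x] with gcd(f, Π₂) = 1 and deg f ≤ n, and set P(x) = ∏ p(x), the product over all monic irreducible p(x) ∈ 𝔽₂[x] with deg p ≤ t and p(x) ∤ f(x). Then for each a(x) ∈ {1, x+1, x²+x+1, …, x^t + x^{t−1} + ⋯ + x + 1}, the polynomial f(x) + a(x)P(x) has no irreducible factor of degree ≤ t; moreover, the polynomials f(x) + a(x)P(x), as a(x) ranges over this set, are pairwise coprime. -/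
open Polynomial Finset

private lemma zmod2_monic {p : Polynomial (ZMod 2)} (hp : p ≠ 0) : p.Monic := by
  have h : p.leadingCoeff ≠ 0 := leadingCoeff_ne_zero.mpr hp
  have h2 : ∀ a : ZMod 2, a ≠ 0 → a = 1 := by decide
  exact h2 _ h

private lemma ai_dvd (t i : ℕ) (hi : i ≤ t) :
    (∑ j ∈ Finset.range (i + 1), (X : Polynomial (ZMod 2)) ^ j) ∣
      (X * ∏ k ∈ Finset.Icc 1 t, (∑ j ∈ Finset.range (k + 1), X ^ j)) := by
  rcases Nat.eq_zero_or_pos i with h0 | h0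
  · subst h0; simp
  · exact Dvd.dvd.mul_left
      (Finset.dvd_prod_of_mem _ (Finset.mem_Icc.mpr ⟨h0, hi⟩)) _

private lemma key1 (t : ℕ) (f : Polynomial (ZMod 2))
    (hcop : IsCoprime f (X * ∏ k ∈ Finset.Icc 1 t, (∑ j ∈ Finset.range (k + 1), X ^ j)))
    (S : Finset (Polynomial (ZMod 2)))
    (hS : ∀ q : Polynomial (ZMod 2),
      q ∈ S ↔ q.Monic ∧ Irreducible q ∧ q.natDegree ≤ t ∧ ¬ q ∣ f)
    (i : ℕ) (hi : i ≤ t) (w : Polynomial (ZMod 2)) (hw : Irreducible w)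
    (hwt : w.natDegree ≤ t) :
    ¬ w ∣ (f + (∑ j ∈ Finset.range (i + 1), X ^ j) * ∏ q ∈ S, q) := by
  intro hdvd
  by_cases hwf : w ∣ f
  · have hwP : w ∣ (∑ j ∈ Finset.range (i + 1), X ^ j) * ∏ q ∈ S, q :=
      (dvd_add_right hwf).mp hdvd
    have hwprime : Prime w := hw.prime
    rcases hwprime.dvd_mul.mp hwP with h1 | h2
    · have : w ∣ X * ∏ k ∈ Finset.Icc 1 t, (∑ j ∈ Finset.range (k + 1), X ^ j) :=
        h1.trans (ai_dvd t i hi)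
      exact hw.not_isUnit (hcop.isUnit_of_dvd' hwf this)
    · obtain ⟨q, hqS, hwq⟩ := hwprime.exists_mem_finset_dvd h2
      obtain ⟨_, hqirr, _, hqf⟩ := (hS q).mp hqS
      exact hqf ((hw.dvd_symm hqirr hwq).trans hwf)
  · have hwS : w ∈ S := (hS w).mpr ⟨zmod2_monic hw.ne_zero, hw, hwt, hwf⟩
    have hwP : w ∣ (∑ j ∈ Finset.range (i + 1), X ^ j) * ∏ q ∈ S, q :=
      (Finset.dvd_prod_of_mem _ hwS).mul_left _
    exact hwf ((dvd_add_right hwP).mp (by rwa [add_comm] at hdvd))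

private lemma key2 (t : ℕ) (f : Polynomial (ZMod 2))
    (hcop : IsCoprime f (X * ∏ k ∈ Finset.Icc 1 t, (∑ j ∈ Finset.range (k + 1), X ^ j)))
    (S : Finset (Polynomial (ZMod 2)))
    (hS : ∀ q : Polynomial (ZMod 2),
      q ∈ S ↔ q.Monic ∧ Irreducible q ∧ q.natDegree ≤ t ∧ ¬ q ∣ f)
    (i j : ℕ) (hij : i < j) (hj : j ≤ t) :
    IsCoprime
      (f + (∑ l ∈ Finset.range (i + 1), X ^ l) * ∏ q ∈ S, q)
      (f + (∑ l ∈ Finset.range (j + 1), X ^ l) * ∏ q ∈ S, q) := by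
  set P : Polynomial (ZMod 2) := ∏ q ∈ S, q with hP
  set ai : Polynomial (ZMod 2) := ∑ l ∈ Finset.range (i + 1), X ^ l with hai
  set aj : Polynomial (ZMod 2) := ∑ l ∈ Finset.range (j + 1), X ^ l with haj
  have hPne : P ≠ 0 := by
    rw [hP]
    exact Finset.prod_ne_zero_iff.mpr fun q hq => ((hS q).mp hq).2.1.ne_zero
  -- difference
  have hdiff : (f + aj * P) - (f + ai * P) = (aj - ai) * P := by ring
  have hd : aj - ai = X ^ (i + 1) * ∑ l ∈ Finset.range (j - i), X ^ l := by
    rw [haj, hai, ← Finset.sum_Ico_eq_sub _ (by omega : i + 1 ≤ j + 1),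
      Finset.sum_Ico_eq_sum_range, show j + 1 - (i + 1) = j - i from by omega,
      Finset.mul_sum]
    exact Finset.sum_congr rfl fun l _ => by rw [← pow_add]
  have hgeom : (∑ l ∈ Finset.range (j - i), (X : Polynomial (ZMod 2)) ^ l).Monic :=
    monic_geom_sum_X (by omega)
  have hdne : aj - ai ≠ 0 := by
    rw [hd]
    exact mul_ne_zero (pow_ne_zero _ X_ne_zero) hgeom.ne_zero
  apply isCoprime_of_dvd
  · rintro ⟨h1, h2⟩
    apply hdne
    have : (aj - ai) * P = 0 := by rw [← hdiff, h1, h2, sub_zero]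
    exact (mul_eq_zero.mp this).resolve_right hPne
  · intro z hz hz0 hzi hzj
    obtain ⟨w, hwirr, hwz⟩ := WfDvdMonoid.exists_irreducible_factor hz hz0
    have hwi : w ∣ f + ai * P := hwz.trans hzi
    have hwj : w ∣ f + aj * P := hwz.trans hzj
    have hwd : w ∣ (aj - ai) * P := by
      rw [← hdiff]; exact dvd_sub hwj hwi
    have hwt : w.natDegree ≤ t := by
      rw [hd, mul_assoc] at hwd
      rcases hwirr.prime.dvd_mul.mp hwd with h1 | h2
      · have hwx := hwirr.prime.dvd_of_dvd_pow h1
        have hle : w.natDegree ≤ (X : Polynomial (ZMod 2)).natDegree :=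
          natDegree_le_of_dvd hwx X_ne_zero
        rw [natDegree_X] at hle
        omega
      · rcases hwirr.prime.dvd_mul.mp h2 with h3 | h4
        · have := natDegree_le_of_dvd h3 hgeom.ne_zero
          have hdeg : (∑ l ∈ Finset.range (j - i), (X : Polynomial (ZMod 2)) ^ l).natDegree
              ≤ t := by
            refine natDegree_sum_le_of_forall_le _ _ fun l hl => ?_
            rw [natDegree_X_pow]
            have := Finset.mem_range.mp hl
            omega
          exact this.trans hdeg
        · obtain ⟨q, hqS, hwq⟩ := hwirr.prime.exists_mem_finset_dvd h4
          obtain ⟨_, hqirr, hqt, _⟩ := (hS q).mp hqS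
          exact (natDegree_le_of_dvd hwq hqirr.ne_zero).trans hqt
    exact key1 t f hcop S hS i (by omega) w hwirr hwt hwi

theorem stmt_15 (ε : ℝ) (hε : ε ∈ Set.Ioo (0 : ℝ) 1) :
    ∃ N : ℕ, ∀ n : ℕ, N ≤ n →
      ∀ t : ℕ, t = ⌈2 * Real.log (Real.logb 2 n) / (1 - ε)⌉₊ →
        ∀ f : Polynomial (ZMod 2),
          IsCoprime f (Polynomial.X *
            ∏ i ∈ Finset.Icc 1 t, (∑ j ∈ Finset.range (i + 1), Polynomial.X ^ j)) →
          f.natDegree ≤ n →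
          ∀ S : Finset (Polynomial (ZMod 2)),
            (∀ q : Polynomial (ZMod 2),
              q ∈ S ↔ q.Monic ∧ Irreducible q ∧ q.natDegree ≤ t ∧ ¬ q ∣ f) →
            (∀ i ≤ t, ∀ w : Polynomial (ZMod 2), Irreducible w → w.natDegree ≤ t →
              ¬ w ∣ (f + (∑ j ∈ Finset.range (i + 1), Polynomial.X ^ j) * ∏ q ∈ S, q)) ∧
            (∀ i ≤ t, ∀ j ≤ t, i ≠ j →
              IsCoprime
                (f + (∑ l ∈ Finset.range (i + 1), Polynomial.X ^ l) * ∏ q ∈ S, q)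
                (f + (∑ l ∈ Finset.range (j + 1), Polynomial.X ^ l) * ∏ q ∈ S, q)) := by
  refine ⟨0, fun n _ t _ f hcop _ S hS => ⟨fun i hi => key1 t f hcop S hS i hi, ?_⟩⟩
  intro i hi j hj hij
  rcases lt_or_gt_of_ne hij with h | h
  · exact key2 t f hcop S hS i j h hj
  · exact (key2 t f hcop S hS j i h hi).symm
end

section
/- Let k be an integer with k ≥ 2, let p₁, p₂, …, p_{2k} be the first 2k primes, and set N₀ = k·∑_{j=1}^{2k} (p_j − 1) + k + 1. Then for every integer n ≥ N₀, there are infinitely many polynomials f(x) ∈ ℤ[x] of degree n such that every k-free polynomial g(x) ∈ ℤ[x] satisfies L(f − g) ≥ 2. -/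
open Polynomial


lemma aux_nat_bezout (p q : ℕ) (hp : p.Prime) (hq : q.Prime) (hne : p ≠ q) :
    ∃ a b : ℕ, a * p = b * q + 1 := by
  have hco : Nat.Coprime p q := (Nat.coprime_primes hp hq).mpr hne
  have hco' : IsCoprime (p : ℤ) (q : ℤ) := by
    rw [Int.isCoprime_iff_gcd_eq_one]; simpa using hco
  obtain ⟨u, v, huv⟩ := hco'
  set N : ℤ := |u| + |v| + 1 with hN
  have hq2 : (2:ℤ) ≤ q := by exact_mod_cast hq.two_le
  have hp2 : (2:ℤ) ≤ p := by exact_mod_cast hp.two_le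
  have hu := abs_nonneg u
  have hv := abs_nonneg v
  have hu1 := neg_abs_le u
  have hv1 := le_abs_self v
  have h1 : 0 ≤ u + N * q := by nlinarith
  have h2 : 0 ≤ N * p - v := by nlinarith
  refine ⟨(u + N * q).toNat, (N * p - v).toNat, ?_⟩
  have : ((u + N * q).toNat : ℤ) * p = ((N * p - v).toNat : ℤ) * q + 1 := by
    rw [Int.toNat_of_nonneg h1, Int.toNat_of_nonneg h2]
    ring_nf
    nlinarith [huv]
  exact_mod_cast this

lemma aux_cyclo_mul (p : ℕ) (hp : p.Prime) :
    cyclotomic p ℤ * (X - 1) = X ^ p - 1 := by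
  haveI : Fact p.Prime := ⟨hp⟩
  rw [cyclotomic_prime]
  exact geom_sum_mul X p

lemma aux_coprime_X_cyclo (p : ℕ) (hp : p.Prime) :
    IsCoprime (X : ℤ[X]) (cyclotomic p ℤ) := by
  haveI : Fact p.Prime := ⟨hp⟩
  obtain ⟨m, hm⟩ : ∃ m, p = m + 1 := ⟨p - 1, by have := hp.two_le; omega⟩
  refine ⟨-(∑ i ∈ Finset.range m, X ^ i), 1, ?_⟩
  rw [cyclotomic_prime, hm, Finset.sum_range_succ']
  have h : ∑ i ∈ Finset.range m, (X:ℤ[X]) ^ (i+1) = (∑ i ∈ Finset.range m, X ^ i) * X := by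
    rw [Finset.sum_mul]; simp [pow_succ]
  rw [h]
  ring

lemma aux_coprime_cyclo (p q : ℕ) (hp : p.Prime) (hq : q.Prime) (hne : p ≠ q) :
    IsCoprime (cyclotomic p ℤ) (cyclotomic q ℤ) := by
  obtain ⟨a, b, hab⟩ := aux_nat_bezout p q hp hq hne
  set A : ℤ[X] := ∑ i ∈ Finset.range a, (X ^ p) ^ i with hA
  set B : ℤ[X] := ∑ i ∈ Finset.range b, (X ^ q) ^ i with hB
  have hA1 : A * (X ^ p - 1) = X ^ (a * p) - 1 := by
    rw [hA, geom_sum_mul, ← pow_mul, mul_comm p a]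
  have hB1 : B * (X ^ q - 1) = X ^ (b * q) - 1 := by
    rw [hB, geom_sum_mul, ← pow_mul, mul_comm q b]
  have key : (A * cyclotomic p ℤ + (-(X * B)) * cyclotomic q ℤ) * (X - 1) = 1 * (X - 1) := by
    have e1 : A * cyclotomic p ℤ * (X - 1) = X ^ (a * p) - 1 := by
      rw [mul_assoc, aux_cyclo_mul p hp, hA1]
    have e2 : X * B * cyclotomic q ℤ * (X - 1) = X ^ (b * q + 1) - X := by
      rw [mul_assoc, mul_assoc, aux_cyclo_mul q hq, ← mul_assoc, mul_comm X B, mul_assoc,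
        mul_comm X (X^q-1), ← mul_assoc, hB1, pow_succ]
      ring
    rw [add_mul, neg_mul, e1]
    rw [show -(X * B * cyclotomic q ℤ) * (X - 1) = -(X * B * cyclotomic q ℤ * (X - 1)) by ring, e2, hab]
    ring
  have hX1 : (X - 1 : ℤ[X]) ≠ 0 := by
    have := Polynomial.X_sub_C_ne_zero (1 : ℤ)
    simpa using this
  have h := mul_right_cancel₀ hX1 key
  exact ⟨A, -(X * B), by rw [h]⟩


lemma aux_crt {R : Type*} [CommRing R] (n : ℕ) (m r : ℕ → R)
    (h : ∀ i < n, ∀ j < n, i ≠ j → IsCoprime (m i) (m j)) :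
    ∃ f : R, ∀ i < n, m i ∣ f - r i := by
  induction n with
  | zero => exact ⟨0, fun i hi => absurd hi (by omega)⟩
  | succ n ih =>
    obtain ⟨f', hf'⟩ := ih (fun i hi j hj hij => h i (by omega) j (by omega) hij)
    have hco : IsCoprime (m n) (∏ i ∈ Finset.range n, m i) :=
      IsCoprime.prod_right fun i hi => by
        simp only [Finset.mem_range] at hi
        exact h n (by omega) i (by omega) (by omega)
    obtain ⟨u, v, huv⟩ := hco
    refine ⟨r n * (v * ∏ i ∈ Finset.range n, m i) + f' * (u * m n), fun i hi => ?_⟩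
    rcases Nat.lt_succ_iff_lt_or_eq.mp hi with hi' | rfl
    · have h1 : m i ∣ (r n - f') * (v * ∏ j ∈ Finset.range n, m j) := by
        refine Dvd.dvd.mul_left (Dvd.dvd.mul_left ?_ v) _
        exact Finset.dvd_prod_of_mem m (Finset.mem_range.mpr hi')
      have h2 : m i ∣ f' - r i := hf' i hi'
      have : r n * (v * ∏ j ∈ Finset.range n, m j) + f' * (u * m n) - r i
          = (r n - f') * (v * ∏ j ∈ Finset.range n, m j) + (f' - r i)
            + f' * (u * m n + v * ∏ j ∈ Finset.range n, m j - 1) := by ring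
      rw [this]
      refine dvd_add (dvd_add h1 h2) ?_
      rw [huv]
      simp
    · have : r i * (v * ∏ j ∈ Finset.range i, m j) + f' * (u * m i) - r i
          = (f' - r i) * (u * m i) + r i * (u * m i + v * ∏ j ∈ Finset.range i, m j - 1) := by
        ring
      rw [this, huv]
      simp [Dvd.dvd.mul_left (dvd_refl (m i)) _]
      exact Dvd.dvd.mul_left (Dvd.dvd.mul_left (dvd_refl (m i)) u) _

theorem stmt_17 (k : ℕ) (hk : 2 ≤ k) :
    ∀ n : ℕ,
      k * (∑ j ∈ Finset.range (2 * k), (Nat.nth Nat.Prime j - 1)) + k + 1 ≤ n →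
      {f : Polynomial ℤ | f.natDegree = n ∧
        ∀ g : Polynomial ℤ, KFree k g → 2 ≤ intLength (f - g)}.Infinite := by
  intro n hn
  set P : ℕ → ℕ := fun i => Nat.nth Nat.Prime i with hP
  have hPprime : ∀ i, (P i).Prime := fun i => Nat.prime_nth_prime i
  have hPinj : Function.Injective P := Nat.nth_injective Nat.infinite_setOf_prime
  set m : ℕ → ℤ[X] := fun i => if i < 2*k then (cyclotomic (P i) ℤ)^k else X^k with hm
  set r : ℕ → ℤ[X] := fun i => if i < k then X^i else if i < 2*k then -X^(i-k) else 0 with hr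
  have hcop : ∀ i < 2*k+1, ∀ j < 2*k+1, i ≠ j → IsCoprime (m i) (m j) := by
    intro i hi j hj hij
    simp only [hm]
    by_cases hi' : i < 2*k <;> by_cases hj' : j < 2*k <;>
      simp only [hi', hj', if_true, if_false, if_pos, if_neg]
    · exact (aux_coprime_cyclo (P i) (P j) (hPprime i) (hPprime j)
        (fun h => hij (hPinj h))).pow
    · exact ((aux_coprime_X_cyclo (P i) (hPprime i)).symm).pow
    · exact (aux_coprime_X_cyclo (P j) (hPprime j)).pow
    · exact (hij (by omega)).elim
  obtain ⟨f₀, hf₀⟩ := aux_crt (2*k+1) m r hcop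
  set Pp : ℤ[X] := ∏ i ∈ Finset.range (2*k+1), m i with hPp
  have hmmonic : ∀ i, (m i).Monic := by
    intro i
    simp only [hm]
    split
    · exact (cyclotomic.monic _ ℤ).pow _
    · exact (monic_X).pow _
  have hPpmonic : Pp.Monic := monic_prod_of_monic _ _ fun i _ => hmmonic i
  set d : ℕ := Pp.natDegree with hd
  have hdval : d = k * (∑ j ∈ Finset.range (2 * k), (P j - 1)) + k := by
    rw [hd, hPp, natDegree_prod _ _ (fun i _ => (hmmonic i).ne_zero)]
    rw [Finset.sum_range_succ]
    have h1 : ∀ i ∈ Finset.range (2*k), (m i).natDegree = k * (P i - 1) := by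
      intro i hi
      simp only [Finset.mem_range] at hi
      simp only [hm, if_pos hi, natDegree_pow, natDegree_cyclotomic,
        Nat.totient_prime (hPprime i)]
    rw [Finset.sum_congr rfl h1]
    have h2 : (m (2*k)).natDegree = k := by simp [hm]
    rw [h2, Finset.mul_sum]
  have hn' : k * (∑ j ∈ Finset.range (2 * k), (P j - 1)) + k + 1 ≤ n := hn
  have hdn : d < n := by omega
  set f₁ : ℤ[X] := f₀ %ₘ Pp with hf₁
  have hdiv : ∀ i < 2*k+1, m i ∣ f₁ - r i := by
    intro i hi
    have h1 : f₁ - r i = (f₀ - r i) - Pp * (f₀ /ₘ Pp) := by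
      rw [hf₁, modByMonic_eq_sub_mul_div _ Pp]; ring
    rw [h1]
    exact dvd_sub (hf₀ i hi) (Dvd.dvd.mul_right
      (Finset.dvd_prod_of_mem m (Finset.mem_range.mpr hi)) _)
  set T : ℤ[X] := Pp * X^(n-d) with hT
  have hTmonic : T.Monic := hPpmonic.mul (monic_X_pow _)
  have hTdeg : T.natDegree = n := by
    rw [hT, hPpmonic.natDegree_mul (monic_X_pow _), natDegree_X_pow, ← hd]
    omega
  have hmT : ∀ i < 2*k+1, m i ∣ T :=
    fun i hi => (Finset.dvd_prod_of_mem m (Finset.mem_range.mpr hi)).mul_right _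
  set F : ℕ → ℤ[X] := fun c => f₁ + C ((c:ℤ)+1) * T with hF
  have hdegf₁ : f₁.degree < (n : WithBot ℕ) := by
    calc f₁.degree < Pp.degree := degree_modByMonic_lt _ hPpmonic
    _ = (d : WithBot ℕ) := degree_eq_natDegree hPpmonic.ne_zero
    _ < (n : WithBot ℕ) := by exact_mod_cast hdn
  have hCT : ∀ c : ℕ, (C ((c:ℤ)+1) * T).degree = (n : WithBot ℕ) := by
    intro c
    rw [degree_mul, degree_C (by exact_mod_cast Nat.succ_ne_zero c), zero_add,
      degree_eq_natDegree hTmonic.ne_zero, hTdeg]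
  have hFdeg : ∀ c : ℕ, (F c).natDegree = n := by
    intro c
    have := degree_add_eq_right_of_degree_lt (p := f₁) (q := C ((c:ℤ)+1) * T)
      (by rw [hCT c]; exact hdegf₁)
    rw [hCT c] at this
    exact natDegree_eq_of_degree_eq_some this
  have hFdiv : ∀ c : ℕ, ∀ i < 2*k+1, m i ∣ F c - r i := by
    intro c i hi
    have : F c - r i = (f₁ - r i) + C ((c:ℤ)+1) * T := by rw [hF]; ring
    rw [this]
    exact dvd_add (hdiv i hi) ((hmT i hi).mul_left _)
  have hXk : ∀ c : ℕ, (X:ℤ[X])^k ∣ F c := by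
    intro c
    have h1 := hFdiv c (2*k) (by omega)
    have h2 : m (2*k) = X^k := by rw [hm]; simp
    have h3 : r (2*k) = 0 := by
      rw [hr]; simp only [if_neg (show ¬ 2*k < k by omega), if_neg (lt_irrefl (2*k))]
    rw [h2, h3, sub_zero] at h1
    exact h1
  have hinj : Function.Injective F := by
      intro c c' hcc
      simp only [hF] at hcc
      have h1 : C ((c:ℤ)+1) * T = C ((c':ℤ)+1) * T := add_left_cancel hcc
      have h2 := mul_right_cancel₀ hTmonic.ne_zero h1
      have h3 : ((c:ℤ)+1) = ((c':ℤ)+1) := C_inj.mp h2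
      exact_mod_cast add_right_cancel h3
  refine Set.infinite_of_injective_forall_mem hinj ?_
  intro c
  refine ⟨hFdeg c, ?_⟩
  intro g hg
  by_contra hlen
  push_neg at hlen
  set h : ℤ[X] := F c - g with hh
  have hgFh : g = F c - h := by rw [hh]; ring
  have hle : intLength h ≤ 1 := by omega
  have hnotX : ¬ (X:ℤ[X])^k ∣ g := hg X irreducible_X (by simp)
  have hterm : ∀ j ∈ h.support, (1:ℤ) ≤ |h.coeff j| := fun j hj =>
    Int.one_le_abs (by simpa using mem_support_iff.mp hj)
  have hcard : (h.support.card : ℤ) ≤ 1 := by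
    calc (h.support.card : ℤ) = h.support.card • (1:ℤ) := by simp
    _ ≤ ∑ j ∈ h.support, |h.coeff j| := Finset.card_nsmul_le_sum _ _ _ hterm
    _ = intLength h := rfl
    _ ≤ 1 := hle
  have hcard' : h.support.card ≤ 1 := by exact_mod_cast hcard
  rcases Nat.le_one_iff_eq_zero_or_eq_one.mp hcard' with hc0 | hc1
  · have h0 : h = 0 := support_eq_empty.mp (Finset.card_eq_zero.mp hc0)
    apply hnotX
    rw [hgFh, h0, sub_zero]
    exact hXk c
  · obtain ⟨j, a, ha, hrep⟩ := card_support_eq_one.mp hc1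
    have hja : h.coeff j = a := by rw [hrep]; simp
    have hjsupp : j ∈ h.support := mem_support_iff.mpr (by rw [hja]; exact ha)
    have habs : |a| ≤ 1 := by
      have h1 := Finset.single_le_sum (f := fun j => |h.coeff j|)
        (fun i _ => abs_nonneg _) hjsupp
      simp only [hja] at h1
      exact le_trans h1 (le_of_le_of_eq (le_of_eq rfl) rfl |>.trans hle)
    have habs1 : |a| = 1 := le_antisymm habs (Int.one_le_abs ha)
    have hcyc : ∀ i < 2*k, ¬ (cyclotomic (P i) ℤ)^k ∣ g := by
      intro i hi
      refine hg (cyclotomic (P i) ℤ) (cyclotomic.irreducible (hPprime i).pos) ?_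
      rw [natDegree_cyclotomic, Nat.totient_prime (hPprime i)]
      have := (hPprime i).two_le
      omega
    by_cases hjk : k ≤ j
    · apply hnotX
      rw [hgFh, hrep]
      exact dvd_sub (hXk c) ((pow_dvd_pow X hjk).mul_left _)
    · push_neg at hjk
      rcases (abs_eq (by norm_num)).mp habs1 with rfl | rfl
      · refine hcyc j (by omega) ?_
        have hmj : m j = (cyclotomic (P j) ℤ)^k := by
          rw [hm]; simp only [if_pos (show j < 2*k by omega)]
        have hrj : r j = X^j := by rw [hr]; simp only [if_pos hjk]
        have := hFdiv c j (by omega)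
        rw [hmj, hrj] at this
        rw [hgFh, hrep]
        simpa using this
      · refine hcyc (k+j) (by omega) ?_
        have hmj : m (k+j) = (cyclotomic (P (k+j)) ℤ)^k := by
          rw [hm]; simp only [if_pos (show k+j < 2*k by omega)]
        have hrj : r (k+j) = -X^j := by
          rw [hr]
          simp only [if_neg (show ¬ k+j < k by omega), if_pos (show k+j < 2*k by omega),
            Nat.add_sub_cancel_left]
        have := hFdiv c (k+j) (by omega)
        rw [hmj, hrj, sub_neg_eq_add] at this
        rw [hgFh, hrep]
        simpa using this
end
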